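/- arXiv:1006.0325 — 4 statements merged into one kernel-verified Lean document; each statement's English description precedes it below -/
import Mathlib

section
/- Let h=(1,h_1,h_2) and h'=(1,h'_1) be pure O-sequences such that h'_1 ≤ h_1. Then the shifted sum (1, h_1+1, h_2+h'_1) is a pure O-sequence. -/
/-- The degree of a monomial, modeled as a finitely supported exponent vector. -/
def monDeg {r : ℕ} (m : Fin r →₀ ℕ) : ℕ := m.sum fun _ e => e

/-- A (monomial) order ideal: a finite nonempty set of monomials closed under divisibility. -/
def IsOrderIdeal {r : ℕ} (X : Finset (Fin r →₀ ℕ)) : Prop :=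
  X.Nonempty ∧ ∀ m ∈ X, ∀ n : Fin r →₀ ℕ, n ≤ m → n ∈ X

/-- An order ideal is pure if all its maximal monomials (w.r.t. divisibility) have
the same degree. -/
def IsPureSet {r : ℕ} (X : Finset (Fin r →₀ ℕ)) : Prop :=
  ∀ m ∈ X, ∀ n ∈ X, (∀ p ∈ X, m ≤ p → p = m) → (∀ p ∈ X, n ≤ p → p = n) →
    monDeg m = monDeg n

/-- The number of monomials of `X` of degree `i`. -/
def degCount {r : ℕ} (X : Finset (Fin r →₀ ℕ)) (i : ℕ) : ℕ :=
  (X.filter fun m => monDeg m = i).card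

/-- `h` is the h-vector `(h_0, …, h_e)` of `X`, where `e` is the top degree of `X`. -/
def IsHVectorOf {r : ℕ} (X : Finset (Fin r →₀ ℕ)) (h : List ℕ) : Prop :=
  h ≠ [] ∧ (∀ i, degCount X i = h.getD i 0) ∧ degCount X (h.length - 1) ≠ 0

/-- A finite sequence is an O-sequence if it is the h-vector of a monomial order ideal. -/
def IsOSequence (h : List ℕ) : Prop :=
  ∃ (r : ℕ) (X : Finset (Fin r →₀ ℕ)), IsOrderIdeal X ∧ IsHVectorOf X h

/-- A finite sequence is a pure O-sequence if it is the h-vector of a pure monomial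
order ideal. -/
def IsPureOSequence (h : List ℕ) : Prop :=
  ∃ (r : ℕ) (X : Finset (Fin r →₀ ℕ)), IsOrderIdeal X ∧ IsPureSet X ∧ IsHVectorOf X h

/-!
Choose `h₁'` linear monomials `S` of a pure order ideal `X` with h-vector `(1, h₁, h₂)`. In one
more variable `y`, the set `X ∪ y · ({1} ∪ S)` is again an order ideal, and its h-vector is
`(1, h₁ + 1, h₂ + h₁')`. Its maximal monomials are either maximal in `X` or of the form `y s` with
`s ∈ S` (`y` itself lies below `y s` once `S ≠ ∅`), so they all have degree 2.
-/

namespace Finsupp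

lemma degree_cons {M : Type*} [AddCommMonoid M] {n : ℕ} (a : M) (m : Fin n →₀ M) :
    (cons a m).degree = a + m.degree := by
  simp [degree_eq_sum, Fin.sum_univ_succ, cons_zero, cons_succ]

lemma cons_le_cons_iff {M : Type*} [Zero M] [LE M] {n : ℕ} {a b : M} {m m' : Fin n →₀ M} :
    cons a m ≤ cons b m' ↔ a ≤ b ∧ m ≤ m' := by
  simp [le_def, Fin.forall_fin_succ, cons_zero, cons_succ]

lemma exists_eq_cons {M : Type*} [Zero M] {n : ℕ} (f : Fin (n + 1) →₀ M) :
    ∃ a m, f = cons a m :=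
  ⟨_, _, (cons_tail f).symm⟩

lemma eq_of_le_of_degree_le {σ : Type*} {m m' : σ →₀ ℕ} (h : m ≤ m')
    (hd : m'.degree ≤ m.degree) : m = m' := by
  obtain ⟨d, rfl⟩ := exists_add_of_le h
  have hd0 : d.degree = 0 := by
    rw [map_add] at hd
    omega
  simp [(degree_eq_zero_iff d).1 hd0]

end Finsupp

open Finsupp

lemma monDeg_eq_degree {r : ℕ} (m : Fin r →₀ ℕ) : monDeg m = m.degree := rfl

lemma monDeg_cons {r : ℕ} (a : ℕ) (m : Fin r →₀ ℕ) : monDeg (cons a m) = a + monDeg m :=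
  degree_cons a m

section HVector

variable {r : ℕ} {X : Finset (Fin r →₀ ℕ)} {h : List ℕ}

lemma IsHVectorOf.getD_top_ne_zero (hX : IsHVectorOf X h) : h.getD (h.length - 1) 0 ≠ 0 :=
  hX.2.1 _ ▸ hX.2.2

lemma IsHVectorOf.monDeg_le (hX : IsHVectorOf X h) {m : Fin r →₀ ℕ} (hm : m ∈ X) :
    monDeg m ≤ h.length - 1 := by
  by_contra! hlt
  have hcount : degCount X (monDeg m) ≠ 0 :=
    Finset.card_ne_zero_of_mem (Finset.mem_filter.2 ⟨hm, rfl⟩)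
  rw [hX.2.1, List.getD_eq_default _ _ (by omega)] at hcount
  exact hcount rfl

lemma IsHVectorOf.exists_monDeg_eq_top (hX : IsHVectorOf X h) :
    ∃ m ∈ X, monDeg m = h.length - 1 := by
  obtain ⟨m, hm⟩ := Finset.card_ne_zero.1 hX.2.2
  exact ⟨m, (Finset.mem_filter.1 hm).1, (Finset.mem_filter.1 hm).2⟩

lemma IsPureSet.monDeg_eq_of_maximal (hP : IsPureSet X) {m n : Fin r →₀ ℕ}
    (hm : Maximal (· ∈ X) m) (hn : Maximal (· ∈ X) n) : monDeg m = monDeg n :=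
  hP m hm.prop n hn.prop (fun _ hp => hm.eq_of_ge hp) (fun _ hp => hn.eq_of_ge hp)

lemma IsPureSet.of_monDeg_maximal_eq {e : ℕ} (hX : ∀ m, Maximal (· ∈ X) m → monDeg m = e) :
    IsPureSet X := fun m hm n hn hmax hnax =>
  (hX m (maximal_iff.2 ⟨hm, fun p hp hle => (hmax p hp hle).symm⟩)).trans
    (hX n (maximal_iff.2 ⟨hn, fun p hp hle => (hnax p hp hle).symm⟩)).symm

lemma IsPureSet.monDeg_maximal (hP : IsPureSet X) (hX : IsHVectorOf X h) {m : Fin r →₀ ℕ}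
    (hm : Maximal (· ∈ X) m) : monDeg m = h.length - 1 := by
  obtain ⟨t, ht, htop⟩ := hX.exists_monDeg_eq_top
  have ht_max : Maximal (· ∈ X) t :=
    maximal_iff.2 ⟨ht, fun p hp hle =>
      eq_of_le_of_degree_le hle (show monDeg p ≤ monDeg t from htop ▸ hX.monDeg_le hp)⟩
  rw [hP.monDeg_eq_of_maximal hm ht_max, htop]

end HVector

section ShiftedUnion

variable {r : ℕ} {X T : Finset (Fin r →₀ ℕ)}

/-- The set `X ∪ y • T`, where the new variable `y` is the one indexed by `0`. -/
noncomputable def shiftedUnion (X T : Finset (Fin r →₀ ℕ)) : Finset (Fin (r + 1) →₀ ℕ) :=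
  X.image (cons 0) ∪ T.image (cons 1)

lemma cons_mem_shiftedUnion {a : ℕ} {m : Fin r →₀ ℕ} :
    cons a m ∈ shiftedUnion X T ↔ a = 0 ∧ m ∈ X ∨ a = 1 ∧ m ∈ T := by
  simp only [shiftedUnion, Finset.mem_union, Finset.mem_image, cons_injective2.eq_iff]
  grind

lemma isOrderIdeal_shiftedUnion (hX : IsOrderIdeal X) (hT : ∀ m ∈ T, ∀ n ≤ m, n ∈ T)
    (hTX : T ⊆ X) : IsOrderIdeal (shiftedUnion X T) := by
  obtain ⟨x, hx⟩ := hX.1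
  refine ⟨⟨cons 0 x, cons_mem_shiftedUnion.2 (.inl ⟨rfl, hx⟩)⟩, fun m hm n hn => ?_⟩
  obtain ⟨a, m, rfl⟩ := exists_eq_cons m
  obtain ⟨b, n, rfl⟩ := exists_eq_cons n
  obtain ⟨hba, hnm⟩ := cons_le_cons_iff.1 hn
  rw [cons_mem_shiftedUnion] at hm ⊢
  rcases hm with ⟨rfl, hm⟩ | ⟨rfl, hm⟩
  · exact .inl ⟨by omega, hX.2 m hm n hnm⟩
  · rcases Nat.le_one_iff_eq_zero_or_eq_one.1 hba with rfl | rfl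
    · exact .inl ⟨rfl, hX.2 m (hTX hm) n hnm⟩
    · exact .inr ⟨rfl, hT m hm n hnm⟩

lemma degCount_image_cons (a i : ℕ) :
    degCount (X.image (cons a)) i = (X.filter fun m => a + monDeg m = i).card := by
  classical
  rw [degCount, Finset.filter_image, Finset.card_image_of_injective _ (cons_right_injective a)]
  congr 1
  exact Finset.filter_congr fun m _ => by rw [monDeg_cons]

lemma degCount_shiftedUnion (i : ℕ) : degCount (shiftedUnion X T) i =
    degCount X i + (T.filter fun m => 1 + monDeg m = i).card := by
  classical
  have hdisj : Disjoint (X.image (cons 0)) (T.image (cons 1)) := by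
    simp only [Finset.disjoint_left, Finset.mem_image]
    rintro _ ⟨x, -, rfl⟩ ⟨t, -, h⟩
    exact absurd (cons_injective2 h).1 one_ne_zero
  rw [degCount, shiftedUnion, Finset.filter_union,
    Finset.card_union_of_disjoint (Finset.disjoint_filter_filter hdisj), ← degCount, ← degCount,
    degCount_image_cons, degCount_image_cons]
  simp only [zero_add, degCount]

lemma degCount_shiftedUnion_zero : degCount (shiftedUnion X T) 0 = degCount X 0 := by
  rw [degCount_shiftedUnion, Finset.filter_false_of_mem (fun _ _ => by omega),
    Finset.card_empty, add_zero]

lemma degCount_shiftedUnion_succ (i : ℕ) :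
    degCount (shiftedUnion X T) (i + 1) = degCount X (i + 1) + degCount T i := by
  rw [degCount_shiftedUnion]
  congr 2
  exact Finset.filter_congr fun _ _ => by omega

lemma maximal_shiftedUnion {a : ℕ} {m : Fin r →₀ ℕ}
    (hm : Maximal (· ∈ shiftedUnion X T) (cons a m)) :
    a = 0 ∧ Maximal (· ∈ X) m ∨ a = 1 ∧ Maximal (· ∈ T) m := by
  have above {p : Fin r →₀ ℕ} (hp : cons a p ∈ shiftedUnion X T) (hle : m ≤ p) : m = p :=
    (cons_injective2 (hm.eq_of_le hp (cons_le_cons_iff.2 ⟨le_rfl, hle⟩))).2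
  rcases cons_mem_shiftedUnion.1 hm.prop with ⟨rfl, hmX⟩ | ⟨rfl, hmT⟩
  · exact .inl ⟨rfl, maximal_iff.2 ⟨hmX, fun p hp =>
      above (cons_mem_shiftedUnion.2 (.inl ⟨rfl, hp⟩))⟩⟩
  · exact .inr ⟨rfl, maximal_iff.2 ⟨hmT, fun p hp =>
      above (cons_mem_shiftedUnion.2 (.inr ⟨rfl, hp⟩))⟩⟩

lemma isPureSet_shiftedUnion {e : ℕ} (hX : ∀ m, Maximal (· ∈ X) m → monDeg m = e + 1)
    (hT : ∀ m, Maximal (· ∈ T) m → monDeg m = e) : IsPureSet (shiftedUnion X T) := by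
  refine IsPureSet.of_monDeg_maximal_eq (e := e + 1) fun n hn => ?_
  obtain ⟨a, m, rfl⟩ := exists_eq_cons n
  rcases maximal_shiftedUnion hn with ⟨rfl, hm⟩ | ⟨rfl, hm⟩
  · rw [monDeg_cons, hX m hm, zero_add]
  · rw [monDeg_cons, hT m hm, add_comm]

end ShiftedUnion

section DegreeOne

variable {r : ℕ} {S : Finset (Fin r →₀ ℕ)}

lemma IsOrderIdeal.zero_mem {X : Finset (Fin r →₀ ℕ)} (hX : IsOrderIdeal X) : 0 ∈ X := by
  obtain ⟨x, hx⟩ := hX.1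
  exact hX.2 x hx 0 zero_le

lemma mem_insert_zero_of_le (hS : ∀ s ∈ S, monDeg s = 1) {m n : Fin r →₀ ℕ}
    (hm : m ∈ insert 0 S) (hnm : n ≤ m) : n ∈ insert 0 S := by
  rcases Finset.mem_insert.1 hm with rfl | hmS
  · exact Finset.mem_insert.2 (.inl (nonpos_iff_eq_zero.1 hnm))
  · have hn : monDeg n ≤ 1 := hS m hmS ▸ degree_mono hnm
    rcases Nat.le_one_iff_eq_zero_or_eq_one.1 hn with hn | hn
    · exact Finset.mem_insert.2 (.inl ((degree_eq_zero_iff n).1 hn))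
    · have hmn : monDeg m ≤ monDeg n := by rw [hn, hS m hmS]
      exact Finset.mem_insert.2 (.inr (eq_of_le_of_degree_le hnm hmn ▸ hmS))

lemma degCount_insert_zero (hS : ∀ s ∈ S, monDeg s = 1) (i : ℕ) :
    degCount (insert 0 S) i = [1, S.card].getD i 0 := by
  have hfilter (k : ℕ) : S.filter (monDeg · = k) = if k = 1 then S else ∅ := by
    split_ifs with hk
    · exact Finset.filter_true_of_mem fun s hs => hk ▸ hS s hs
    · exact Finset.filter_false_of_mem fun s hs => by rw [hS s hs]; omega
  rcases i with _ | _ | i <;>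
    simp [degCount, Finset.filter_insert, monDeg_eq_degree 0, hfilter]

lemma monDeg_maximal_insert_zero (hS : ∀ s ∈ S, monDeg s = 1) (hne : S.Nonempty)
    {m : Fin r →₀ ℕ} (hm : Maximal (· ∈ insert 0 S) m) : monDeg m = 1 := by
  rcases Finset.mem_insert.1 hm.prop with rfl | hmS
  · obtain ⟨s, hs⟩ := hne
    have h0s : 0 = s := hm.eq_of_le (Finset.mem_insert_of_mem hs) zero_le
    simpa [← h0s, monDeg_eq_degree] using hS s hs
  · exact hS m hmS

lemma isHVectorOf_shiftedUnion_insert_zero {X : Finset (Fin r →₀ ℕ)} {h1 h2 : ℕ}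
    (hX : IsHVectorOf X [1, h1, h2]) (hS : ∀ s ∈ S, monDeg s = 1) :
    IsHVectorOf (shiftedUnion X (insert 0 S)) [1, h1 + 1, h2 + S.card] := by
  refine ⟨List.cons_ne_nil _ _, fun i => ?_, ?_⟩
  · rcases i with _ | i
    · simp [degCount_shiftedUnion_zero, hX.2.1]
    · rw [degCount_shiftedUnion_succ, hX.2.1, degCount_insert_zero hS]
      rcases i with _ | _ | i <;> simp
  · rw [show [1, h1 + 1, h2 + S.card].length - 1 = 1 + 1 from rfl, degCount_shiftedUnion_succ,
      hX.2.1, degCount_insert_zero hS]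
    exact (Nat.add_pos_left (Nat.pos_of_ne_zero hX.getD_top_ne_zero) _).ne'

end DegreeOne

/-- If `h = (1,h₁,h₂)` and `h' = (1,h₁')` are pure O-sequences with `h₁' ≤ h₁`,
then their shifted sum `(1, h₁+1, h₂+h₁')` is a pure O-sequence. -/
theorem shifted_sum_pure_soc2 (h1 h2 h1' : ℕ)
    (H : IsPureOSequence [1, h1, h2]) (H' : IsPureOSequence [1, h1'])
    (le1 : h1' ≤ h1) :
    IsPureOSequence [1, h1 + 1, h2 + h1'] := by
  obtain ⟨r, X, hXideal, hXpure, hXh⟩ := H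
  obtain ⟨_, _, -, -, hX'h⟩ := H'
  obtain ⟨S, hSX, hScard⟩ := Finset.exists_subset_card_eq (s := X.filter fun m => monDeg m = 1)
    (le1.trans_eq (hXh.2.1 1).symm)
  have hSdeg : ∀ s ∈ S, monDeg s = 1 := fun s hs => (Finset.mem_filter.1 (hSX hs)).2
  have hSne : S.Nonempty := Finset.card_ne_zero.1 (hScard ▸ hX'h.getD_top_ne_zero)
  refine ⟨r + 1, shiftedUnion X (insert 0 S),
    isOrderIdeal_shiftedUnion hXideal (fun _ hm _ => mem_insert_zero_of_le hSdeg hm)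
      (Finset.insert_subset hXideal.zero_mem (hSX.trans (Finset.filter_subset _ _))),
    isPureSet_shiftedUnion (e := 1) (fun _ => hXpure.monDeg_maximal hXh)
      (fun _ => monDeg_maximal_insert_zero hSdeg hSne),
    hScard ▸ isHVectorOf_shiftedUnion_insert_zero hXh hSdeg⟩
end

section
/- Let M be a loopless matroid on a finite ground set with rank at most 3. Suppose M has no coloops, and that for every element w of the ground set, the deletion M∖w has a coloop. Then any two distinct circuits of M are disjoint (that is, M is a complete intersection matroid). -/
/-- `matroidF M i` is the number `f_{i-1}` of independent sets of `M` of cardinality `i`. -/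
noncomputable def matroidF {α : Type*} (M : Matroid α) (i : ℕ) : ℕ :=
  {I : Set α | M.Indep I ∧ I.ncard = i}.ncard

/-- The `j`-th entry of the h-vector of a rank-`d` matroid `M`:
`h_j = ∑_{i=0}^{j} (-1)^{j-i} C(d-i, j-i) f_{i-1}`. -/
noncomputable def matroidH {α : Type*} (M : Matroid α) (d j : ℕ) : ℤ :=
  ∑ i ∈ Finset.range (j + 1),
    (-1 : ℤ) ^ (j - i) * ((d - i).choose (j - i)) * (matroidF M i)

/-- A loop: an element of the ground set belonging to no independent set. -/
def IsLoopElem {α : Type*} (M : Matroid α) (v : α) : Prop :=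
  v ∈ M.E ∧ ¬ M.Indep {v}

/-- A coloop: an element of the ground set contained in every basis. -/
def IsColoopElem {α : Type*} (M : Matroid α) (v : α) : Prop :=
  v ∈ M.E ∧ ∀ B, M.IsBase B → v ∈ B

/-- A circuit: a minimal dependent set. -/
def IsCircuitSet {α : Type*} (M : Matroid α) (C : Set α) : Prop :=
  C ⊆ M.E ∧ ¬ M.Indep C ∧ ∀ D, D ⊂ C → M.Indep D

/-!
If `e` is a coloop of `M ∖ w` but not of `M`, then `e ≠ w` and `e`, `w` lie in exactly the same
circuits of `M`; by hypothesis every element has such a partner. If two circuits `C₁ ≠ C₂` met in `x`, pick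
`a ∈ C₁ \ C₂` and `b ∈ C₂ \ C₁`; with partners `x', a', b'` of `x, a, b`, the set `{x, x', a', b'}`
is independent, since a circuit inside it cannot contain `a'` or `b'` (it would contain `a` or `b`)
and so lies in `{x, x'} ⊂ C₁`. This contradicts rank at most 3.
-/

open Set Matroid

section

variable {α : Type*} {M : Matroid α} {C C₁ C₂ : Set α} {e w : α}

lemma isCircuitSet_iff : IsCircuitSet M C ↔ M.IsCircuit C := by
  rw [isCircuit_iff_forall_ssubset, dep_iff]
  exact ⟨fun ⟨hE, hdep, hmin⟩ ↦ ⟨⟨hdep, hE⟩, hmin⟩, fun ⟨⟨hdep, hE⟩, hmin⟩ ↦ ⟨hE, hdep, hmin⟩⟩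

lemma isColoopElem_iff : IsColoopElem M e ↔ M.IsColoop e :=
  ⟨fun h ↦ isColoop_iff_forall_mem_isBase.2 fun _ hB ↦ h.2 _ hB,
    fun h ↦ ⟨h.mem_ground, fun _ hB ↦ h.mem_of_isBase hB⟩⟩

/-- `e` and `w` are distinct and lie in the same circuits; in a matroid without coloops this
says that `{e, w}` is a cocircuit. -/
def SeriesPartners (M : Matroid α) (e w : α) : Prop :=
  e ∈ M.E ∧ e ≠ w ∧ ∀ ⦃C⦄, M.IsCircuit C → (e ∈ C ↔ w ∈ C)

lemma Matroid.IsCircuit.mem_of_isColoop_delete (hC : M.IsCircuit C) (he : (M ＼ {w}).IsColoop e)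
    (heC : e ∈ C) : w ∈ C := by
  by_contra hwC
  exact (delete_isCircuit_iff.2 ⟨hC, disjoint_singleton_right.2 hwC⟩).not_isColoop_of_mem heC he

lemma seriesPartners_of_isColoop_delete (he : (M ＼ {w}).IsColoop e) (hnc : ¬ M.IsColoop e) :
    SeriesPartners M e w := by
  obtain ⟨heE, hew⟩ : e ∈ M.E ∧ e ≠ w := by simpa using he.mem_ground
  refine ⟨heE, hew, fun C hC ↦ ⟨hC.mem_of_isColoop_delete he, fun hwC ↦ ?_⟩⟩
  by_contra heC
  obtain ⟨C', hC', heC'⟩ := exists_mem_isCircuit_of_not_isColoop heE hnc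
  obtain ⟨C'', hC''C, hC'', heC''⟩ :=
    hC'.strong_elimination hC (hC'.mem_of_isColoop_delete he heC') hwC heC' heC
  exact (hC''C (hC''.mem_of_isColoop_delete he heC'')).2 rfl

lemma four_le_eRank_of_not_disjoint (hser : ∀ w ∈ M.E, ∃ e, SeriesPartners M e w)
    (hC₁ : M.IsCircuit C₁) (hC₂ : M.IsCircuit C₂) (hne : C₁ ≠ C₂) (hmeet : ¬ Disjoint C₁ C₂) :
    4 ≤ M.eRank := by
  obtain ⟨x, hx₁, hx₂⟩ := not_disjoint_iff.1 hmeet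
  obtain ⟨a, ha₁, ha₂⟩ := not_subset.1 fun h ↦ hne (hC₁.eq_of_subset_isCircuit hC₂ h)
  obtain ⟨b, hb₂, hb₁⟩ := not_subset.1 fun h ↦ hne (hC₂.eq_of_subset_isCircuit hC₁ h).symm
  obtain ⟨x', hx'E, hx'x, hx'⟩ := hser x (hC₁.subset_ground hx₁)
  obtain ⟨a', ha'E, ha'a, ha'⟩ := hser a (hC₁.subset_ground ha₁)
  obtain ⟨b', hb'E, hb'b, hb'⟩ := hser b (hC₂.subset_ground hb₂)
  have hx'₁ : x' ∈ C₁ := (hx' hC₁).2 hx₁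
  have hx'₂ : x' ∈ C₂ := (hx' hC₂).2 hx₂
  have ha'₁ : a' ∈ C₁ := (ha' hC₁).2 ha₁
  have ha'₂ : a' ∉ C₂ := fun h ↦ ha₂ ((ha' hC₂).1 h)
  have hb'₂ : b' ∈ C₂ := (hb' hC₂).2 hb₂
  have hb'₁ : b' ∉ C₁ := fun h ↦ hb₁ ((hb' hC₁).1 h)
  have hI : M.Indep {x, x', a', b'} := by
    rw [indep_iff_forall_subset_not_isCircuit
      (insert_subset (hC₁.subset_ground hx₁) (insert_subset hx'E (pair_subset ha'E hb'E)))]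
    intro C hCI hC
    have haI : a ∉ ({x, x', a', b'} : Set α) := by
      rintro (rfl | rfl | rfl | rfl) <;> simp_all
    have hbI : b ∉ ({x, x', a', b'} : Set α) := by
      rintro (rfl | rfl | rfl | rfl) <;> simp_all
    have hCxx' : C ⊆ {x, x'} := fun y hy ↦ by
      obtain rfl | rfl | rfl | rfl := hCI hy
      · exact .inl rfl
      · exact .inr rfl
      · exact (haI (hCI ((ha' hC).1 hy))).elim
      · exact (hbI (hCI ((hb' hC).1 hy))).elim
    have hxx'C₁ : ({x, x'} : Set α) ⊂ C₁ :=
      (ssubset_iff_of_subset (pair_subset hx₁ hx'₁)).2 ⟨a, ha₁, by aesop⟩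
    exact hC.dep.not_indep (hC₁.ssubset_indep (hCxx'.trans_ssubset hxx'C₁))
  have hcard : ({x, x', a', b'} : Set α).encard = 4 := by
    rw [encard_insert_of_notMem (by aesop), encard_insert_of_notMem (by aesop),
      encard_pair (by aesop)]
    rfl
  exact hcard ▸ hI.encard_le_eRank

end

theorem deletion_cones_implies_complete_intersection_general {α : Type*} (M : Matroid α)
    (hfin : M.E.Finite)
    (hrank : ∀ B, M.IsBase B → B.ncard ≤ 3)
    (hnc : ∀ e, ¬ IsColoopElem M e)
    (hdel : ∀ w ∈ M.E, ∃ e, IsColoopElem (M.restrict (M.E \ {w})) e) :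
    ∀ C₁ C₂, IsCircuitSet M C₁ → IsCircuitSet M C₂ → C₁ ≠ C₂ → Disjoint C₁ C₂ := by
  intro C₁ C₂ hC₁ hC₂ hne
  by_contra hmeet
  have hser : ∀ w ∈ M.E, ∃ e, SeriesPartners M e w := fun w hw ↦ by
    obtain ⟨e, he⟩ := hdel w hw
    rw [isColoopElem_iff, ← delete_eq_restrict] at he
    exact ⟨e, seriesPartners_of_isColoop_delete he (isColoopElem_iff.not.1 (hnc e))⟩
  have h4 := four_le_eRank_of_not_disjoint hser (isCircuitSet_iff.1 hC₁) (isCircuitSet_iff.1 hC₂)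
    hne hmeet
  obtain ⟨B, hB⟩ := M.exists_isBase
  rw [← hB.encard_eq_eRank, ← (hfin.subset hB.subset_ground).cast_ncard_eq] at h4
  have h3 := hrank B hB
  norm_cast at h4
  omega

/-- Let `M` be a loopless matroid of rank at most 3 on a finite ground set with no
coloops, such that for every element `w` the deletion `M \ w` has a coloop. Then any
two distinct circuits of `M` are disjoint, i.e. `M` is a complete intersection. -/
theorem deletion_cones_implies_complete_intersection {α : Type*} (M : Matroid α)
    (hfin : M.E.Finite)
    (hloopless : ∀ v ∈ M.E, M.Indep {v})
    (hrank : ∀ B, M.IsBase B → B.ncard ≤ 3)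
    (hnc : ∀ e, ¬ IsColoopElem M e)
    (hdel : ∀ w ∈ M.E, ∃ e, IsColoopElem (M.restrict (M.E \ {w})) e) :
    ∀ C₁ C₂, IsCircuitSet M C₁ → IsCircuitSet M C₂ → C₁ ≠ C₂ → Disjoint C₁ C₂ :=
  deletion_cones_implies_complete_intersection_general M hfin hrank hnc hdel
end

section
/- The sequences (1,6,6,6) and (1,3,6) are pure O-sequences, but the sequence (1,7,9,12) is not a pure O-sequence. -/
example {r : ℕ} (m : Fin r →₀ ℕ) : monDeg m = ∑ i ∈ m.support, m i := rfl

lemma monDeg_mono {r : ℕ} {n m : Fin r →₀ ℕ} (h : n ≤ m) : monDeg n ≤ monDeg m := by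
  classical
  have h1 : monDeg n = ∑ i ∈ n.support ∪ m.support, n i := by
    refine Finsupp.sum_of_support_subset _ (Finset.subset_union_left) _ (fun i _ => rfl)
  have h2 : monDeg m = ∑ i ∈ n.support ∪ m.support, m i := by
    refine Finsupp.sum_of_support_subset _ (Finset.subset_union_right) _ (fun i _ => rfl)
  rw [h1, h2]
  exact Finset.sum_le_sum (fun i _ => h i)

lemma monDeg_add {r : ℕ} (m n : Fin r →₀ ℕ) : monDeg (m + n) = monDeg m + monDeg n := by
  classical
  exact Finsupp.sum_add_index' (fun _ => rfl) (fun _ _ _ => rfl)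

lemma monDeg_single {r : ℕ} (i : Fin r) (k : ℕ) : monDeg (Finsupp.single i k) = k := by
  classical
  simp [monDeg, Finsupp.sum_single_index]

lemma monDeg_zero {r : ℕ} : monDeg (0 : Fin r →₀ ℕ) = 0 := by simp [monDeg]

lemma apply_le_monDeg {r : ℕ} (m : Fin r →₀ ℕ) (i : Fin r) : m i ≤ monDeg m := by
  classical
  by_cases h : i ∈ m.support
  · exact Finset.single_le_sum (fun j _ => Nat.zero_le _) h
  · simp [Finsupp.notMem_support_iff.mp h]

lemma single_le_of_apply {r : ℕ} (m : Fin r →₀ ℕ) (i : Fin r) (k : ℕ) (h : k ≤ m i) :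
    Finsupp.single i k ≤ m := by
  intro j
  rcases eq_or_ne j i with rfl | hne
  · simpa using h
  · simp [Finsupp.single_apply, Ne.symm hne]

lemma card_support_le_monDeg {r : ℕ} (m : Fin r →₀ ℕ) : m.support.card ≤ monDeg m := by
  classical
  calc m.support.card = ∑ i ∈ m.support, 1 := by simp
  _ ≤ ∑ i ∈ m.support, m i := Finset.sum_le_sum (fun i hi => Nat.one_le_iff_ne_zero.mpr (Finsupp.mem_support_iff.mp hi))
  _ = monDeg m := rfl

lemma monDeg_eq_zero {r : ℕ} {m : Fin r →₀ ℕ} (h : monDeg m = 0) : m = 0 := by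
  classical
  ext i
  have := apply_le_monDeg m i
  simp only [Finsupp.coe_zero, Pi.zero_apply]
  omega

lemma support_nonempty_of_deg {r : ℕ} {m : Fin r →₀ ℕ} (h : monDeg m ≠ 0) : m.support.Nonempty := by
  classical
  rcases Finset.eq_empty_or_nonempty m.support with he | hne
  · exfalso; apply h
    have : m = 0 := by ext i; by_contra hc; exact (Finset.eq_empty_iff_forall_notMem.mp he i) (Finsupp.mem_support_iff.mpr hc)
    simp [this, monDeg_zero]
  · exact hne

lemma monDeg_eq_sum_support {r : ℕ} (m : Fin r →₀ ℕ) : monDeg m = ∑ i ∈ m.support, m i := rfl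

lemma deg_one_class {r : ℕ} {m : Fin r →₀ ℕ} (h : monDeg m = 1) : ∃ v, m = Finsupp.single v 1 := by
  classical
  have hc1 : m.support.card = 1 := by
    have h1 := card_support_le_monDeg m
    have h2 : m.support.Nonempty := support_nonempty_of_deg (by omega)
    have := Finset.card_pos.mpr h2
    omega
  obtain ⟨a, ha, hm⟩ := Finsupp.card_support_eq_one.mp hc1
  have hv := monDeg_single a (m a)
  rw [← hm] at hv
  have hval : m a = 1 := by omega
  rw [hval] at hm
  exact ⟨a, hm⟩

lemma deg3_card1_class {r : ℕ} {m : Fin r →₀ ℕ} (h : monDeg m = 3) (hc : m.support.card = 1) :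
    ∃ v, m = Finsupp.single v 3 := by
  classical
  obtain ⟨a, ha, hm⟩ := Finsupp.card_support_eq_one.mp hc
  have hv := monDeg_single a (m a)
  rw [← hm] at hv
  have hval : m a = 3 := by omega
  rw [hval] at hm
  exact ⟨a, hm⟩

lemma support_pair_vals {r : ℕ} {m : Fin r →₀ ℕ} {x y : Fin r} (hxy : x ≠ y)
    (hs : m.support = {x, y}) : monDeg m = m x + m y := by
  classical
  rw [monDeg_eq_sum_support, hs, Finset.sum_pair hxy]

lemma eq_pair_support {r : ℕ} {m : Fin r →₀ ℕ} {x y : Fin r} (hxy : x ≠ y)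
    (hx : m x ≠ 0) (hy : m y ≠ 0) (hc : m.support.card = 2) : m.support = {x, y} := by
  classical
  have hsub : ({x, y} : Finset (Fin r)) ⊆ m.support := by
    intro j hj
    rcases Finset.mem_insert.mp hj with h' | h'
    · exact h' ▸ Finsupp.mem_support_iff.mpr hx
    · exact (Finset.mem_singleton.mp h') ▸ Finsupp.mem_support_iff.mpr hy
  have hcard : ({x, y} : Finset (Fin r)).card = 2 := Finset.card_pair hxy
  exact (Finset.eq_of_subset_of_card_le hsub (by omega)).symm

lemma pair_ext {r : ℕ} {m : Fin r →₀ ℕ} {x y : Fin r} (hxy : x ≠ y) (hc : m.support = {x, y})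
    {p q : ℕ} (hp : m x = p) (hq : m y = q) :
    m = Finsupp.single x p + Finsupp.single y q := by
  classical
  ext j
  by_cases hjx : j = x
  · subst hjx; simp [Finsupp.single_apply, hxy, Ne.symm hxy, hp]
  · by_cases hjy : j = y
    · subst hjy; simp [Finsupp.single_apply, hxy, Ne.symm hxy, hq]
    · have : j ∉ m.support := by rw [hc]; simp [hjx, hjy]
      have hmj : m j = 0 := Finsupp.notMem_support_iff.mp this
      simp [Finsupp.single_apply, Ne.symm hjx, Ne.symm hjy, hmj]

lemma deg3_card2_class {r : ℕ} {m : Fin r →₀ ℕ} (h : monDeg m = 3) (hc : m.support.card = 2) :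
    ∃ x y, x ≠ y ∧ m x = 2 ∧ m y = 1 ∧ m = Finsupp.single x 2 + Finsupp.single y 1 := by
  classical
  obtain ⟨a, b, hab, hs⟩ := Finset.card_eq_two.mp hc
  have hva : m a ≠ 0 := Finsupp.mem_support_iff.mp (by rw [hs]; simp)
  have hvb : m b ≠ 0 := Finsupp.mem_support_iff.mp (by rw [hs]; simp)
  have hsum : m a + m b = 3 := by rw [← support_pair_vals hab hs, h]
  rcases Nat.lt_or_ge (m a) 2 with hlt | hge
  · -- m a = 1, m b = 2
    have ha1 : m a = 1 := by omega
    have hb2 : m b = 2 := by omega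
    exact ⟨b, a, hab.symm, hb2, ha1,
      pair_ext hab.symm (by rw [hs]; exact Finset.pair_comm a b) hb2 ha1⟩
  · have ha2 : m a = 2 := by omega
    have hb1 : m b = 1 := by omega
    exact ⟨a, b, hab, ha2, hb1, pair_ext hab hs ha2 hb1⟩

lemma eq_triple_support {r : ℕ} {m : Fin r →₀ ℕ} {x y z : Fin r}
    (hxy : x ≠ y) (hxz : x ≠ z) (hyz : y ≠ z)
    (hx : m x ≠ 0) (hy : m y ≠ 0) (hz : m z ≠ 0) (hc : m.support.card = 3) :
    m.support = {x, y, z} := by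
  classical
  have hsub : ({x, y, z} : Finset (Fin r)) ⊆ m.support := by
    intro j hj
    simp only [Finset.mem_insert, Finset.mem_singleton] at hj
    rcases hj with h' | h' | h' <;>
      exact h' ▸ Finsupp.mem_support_iff.mpr (by assumption)
  have hcard : ({x, y, z} : Finset (Fin r)).card = 3 := by
    rw [Finset.card_insert_of_notMem (by simp [hxy, hxz]),
      Finset.card_insert_of_notMem (by simp [hyz]), Finset.card_singleton]
  exact (Finset.eq_of_subset_of_card_le hsub (by omega)).symm

lemma triple_sum {r : ℕ} {m : Fin r →₀ ℕ} {x y z : Fin r}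
    (hxy : x ≠ y) (hxz : x ≠ z) (hyz : y ≠ z) (hs : m.support = {x, y, z}) :
    monDeg m = m x + m y + m z := by
  classical
  rw [monDeg_eq_sum_support, hs, Finset.sum_insert (by simp [hxy, hxz]),
    Finset.sum_pair hyz, Nat.add_assoc]

lemma triple_ext {r : ℕ} {m : Fin r →₀ ℕ} {x y z : Fin r}
    (hxy : x ≠ y) (hxz : x ≠ z) (hyz : y ≠ z) (hs : m.support = {x, y, z})
    (hx : m x = 1) (hy : m y = 1) (hz : m z = 1) :
    m = Finsupp.single x 1 + Finsupp.single y 1 + Finsupp.single z 1 := by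
  classical
  ext j
  by_cases hjx : j = x
  · subst hjx; simp [Finsupp.single_apply, hxy, hxz, Ne.symm hxy, Ne.symm hxz, hx]
  · by_cases hjy : j = y
    · subst hjy; simp [Finsupp.single_apply, hxy, Ne.symm hxy, hyz, Ne.symm hyz, hy]
    · by_cases hjz : j = z
      · subst hjz; simp [Finsupp.single_apply, hxz, Ne.symm hxz, hyz, Ne.symm hyz, hz]
      · have : j ∉ m.support := by rw [hs]; simp [hjx, hjy, hjz]
        have hmj : m j = 0 := Finsupp.notMem_support_iff.mp this
        simp [Finsupp.single_apply, Ne.symm hjx, Ne.symm hjy, Ne.symm hjz, hmj]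

lemma deg3_card3_class {r : ℕ} {m : Fin r →₀ ℕ} (h : monDeg m = 3) (hc : m.support.card = 3) :
    ∀ i ∈ m.support, m i = 1 := by
  classical
  obtain ⟨a, b, c, hab, hac, hbc, hs⟩ := Finset.card_eq_three.mp hc
  have hva : m a ≠ 0 := Finsupp.mem_support_iff.mp (by rw [hs]; simp)
  have hvb : m b ≠ 0 := Finsupp.mem_support_iff.mp (by rw [hs]; simp)
  have hvc : m c ≠ 0 := Finsupp.mem_support_iff.mp (by rw [hs]; simp)
  have hsum := triple_sum hab hac hbc hs
  rw [h] at hsum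
  intro i hi
  rw [hs] at hi
  simp only [Finset.mem_insert, Finset.mem_singleton] at hi
  rcases hi with rfl | rfl | rfl <;> omega

open Finsupp in
lemma pair_le {r : ℕ} {m : Fin r →₀ ℕ} {x y : Fin r} (hxy : x ≠ y)
    (hx : 1 ≤ m x) (hy : 1 ≤ m y) : single x 1 + single y 1 ≤ m := by
  intro j
  simp only [Finsupp.add_apply, Finsupp.single_apply]
  by_cases hjx : x = j
  · subst hjx; simp [Ne.symm hxy]; omega
  · by_cases hjy : y = j
    · subst hjy; simp [hjx]; omega
    · simp [hjx, hjy]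

open Finsupp in
lemma triple_le {r : ℕ} {m : Fin r →₀ ℕ} {x y z : Fin r} (hxy : x ≠ y) (hxz : x ≠ z) (hyz : y ≠ z)
    (hx : 1 ≤ m x) (hy : 1 ≤ m y) (hz : 1 ≤ m z) :
    single x 1 + single y 1 + single z 1 ≤ m := by
  intro j
  simp only [Finsupp.add_apply, Finsupp.single_apply]
  by_cases hjx : x = j
  · subst hjx; simp [Ne.symm hxy, Ne.symm hxz]; omega
  · by_cases hjy : y = j
    · subst hjy; simp [hjx, Ne.symm hyz]; omega
    · by_cases hjz : z = j
      · subst hjz; simp [hjx, hjy]; omega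
      · simp [hjx, hjy, hjz]

open Finsupp in
lemma pair_apply {r : ℕ} (x y j : Fin r) :
    (single x 1 + single y 1 : Fin r →₀ ℕ) j
      = (if x = j then 1 else 0) + (if y = j then 1 else 0) := by
  simp [Finsupp.add_apply, Finsupp.single_apply]

open Finsupp in
lemma supp_pair {r : ℕ} {x y : Fin r} (hxy : x ≠ y) :
    (single x 1 + single y 1 : Fin r →₀ ℕ).support = {x, y} := by
  ext j
  rw [Finsupp.mem_support_iff, pair_apply]
  by_cases hjx : x = j
  · subst hjx; simp
  · by_cases hjy : y = j
    · subst hjy; simp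
    · simp [hjx, hjy, Ne.symm hjx, Ne.symm hjy]

open Finsupp in
lemma supp_triple {r : ℕ} {x y z : Fin r} (hxy : x ≠ y) (hxz : x ≠ z) (hyz : y ≠ z) :
    (single x 1 + single y 1 + single z 1 : Fin r →₀ ℕ).support = {x, y, z} := by
  ext j
  simp only [Finsupp.mem_support_iff, Finsupp.add_apply, Finsupp.single_apply]
  by_cases hjx : x = j
  · subst hjx; simp
  · by_cases hjy : y = j
    · subst hjy; simp
    · by_cases hjz : z = j
      · subst hjz; simp
      · simp [hjx, hjy, hjz, Ne.symm hjx, Ne.symm hjy, Ne.symm hjz]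

open Finsupp in
lemma deg_pair {r : ℕ} (x y : Fin r) : monDeg (single x 1 + single y 1 : Fin r →₀ ℕ) = 2 := by
  rw [monDeg_add, monDeg_single, monDeg_single]

open Finsupp in
lemma deg_triple {r : ℕ} (x y z : Fin r) :
    monDeg (single x 1 + single y 1 + single z 1 : Fin r →₀ ℕ) = 3 := by
  rw [monDeg_add, monDeg_add, monDeg_single, monDeg_single, monDeg_single]

lemma deg2_card1_class {r : ℕ} {m : Fin r →₀ ℕ} (h : monDeg m = 2) (hc : m.support.card = 1) :
    ∃ v, m = Finsupp.single v 2 := by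
  classical
  obtain ⟨a, ha, hm⟩ := Finsupp.card_support_eq_one.mp hc
  have hv := monDeg_single a (m a)
  rw [← hm] at hv
  have hval : m a = 2 := by omega
  rw [hval] at hm
  exact ⟨a, hm⟩

lemma deg2_card2_class {r : ℕ} {m : Fin r →₀ ℕ} (h : monDeg m = 2) (hc : m.support.card = 2) :
    ∃ x y, x ≠ y ∧ m = Finsupp.single x 1 + Finsupp.single y 1 := by
  classical
  obtain ⟨a, b, hab, hs⟩ := Finset.card_eq_two.mp hc
  have hva : m a ≠ 0 := Finsupp.mem_support_iff.mp (by rw [hs]; simp)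
  have hvb : m b ≠ 0 := Finsupp.mem_support_iff.mp (by rw [hs]; simp)
  have hsum : m a + m b = 2 := by rw [← support_pair_vals hab hs, h]
  exact ⟨a, b, hab, pair_ext hab hs (by omega) (by omega)⟩

section X666
open Finsupp

noncomputable def X666 : Finset (Fin 6 →₀ ℕ) :=
  (Finset.univ : Finset (Fin 6 × Fin 4)).image (fun p => Finsupp.single p.1 (p.2 : ℕ))

lemma mem_X666 {m : Fin 6 →₀ ℕ} :
    m ∈ X666 ↔ ∃ (i : Fin 6) (k : ℕ), k ≤ 3 ∧ m = Finsupp.single i k := by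
  constructor
  · intro hm
    obtain ⟨p, _, hp⟩ := Finset.mem_image.mp hm
    exact ⟨p.1, (p.2 : ℕ), Fin.is_le p.2, hp.symm⟩
  · rintro ⟨i, k, hk, rfl⟩
    exact Finset.mem_image.mpr ⟨(i, ⟨k, by omega⟩), Finset.mem_univ _, rfl⟩

lemma X666_orderIdeal : IsOrderIdeal X666 := by
  constructor
  · exact ⟨Finsupp.single 0 0, mem_X666.mpr ⟨0, 0, by omega, rfl⟩⟩
  · intro m hm n hn
    obtain ⟨i, k, hk, rfl⟩ := mem_X666.mp hm
    have hni : n i ≤ k := by simpa using hn i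
    have : n = Finsupp.single i (n i) := by
      ext j
      rcases eq_or_ne j i with rfl | hne
      · simp
      · have hnj := hn j
        rw [Finsupp.single_apply, if_neg (fun h : i = j => hne h.symm)] at hnj
        rw [Finsupp.single_apply, if_neg (fun h : i = j => hne h.symm)]
        omega
    rw [this]
    exact mem_X666.mpr ⟨i, n i, by omega, rfl⟩

lemma X666_maximal_deg {m : Fin 6 →₀ ℕ} (hm : m ∈ X666)
    (hmax : ∀ p ∈ X666, m ≤ p → p = m) : monDeg m = 3 := by
  obtain ⟨i, k, hk, rfl⟩ := mem_X666.mp hm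
  rcases Nat.lt_or_ge k 3 with hlt | hge
  · exfalso
    have hp : Finsupp.single i 3 ∈ X666 := mem_X666.mpr ⟨i, 3, le_refl _, rfl⟩
    have hle : Finsupp.single i k ≤ Finsupp.single i 3 :=
      single_le_of_apply _ _ _ (by simp; omega)
    have heq := hmax _ hp hle
    have := DFunLike.congr_fun heq i
    simp at this
    omega
  · rw [monDeg_single]; omega

lemma X666_pure : IsPureSet X666 := by
  intro m hm n hn hmaxm hmaxn
  rw [X666_maximal_deg hm hmaxm, X666_maximal_deg hn hmaxn]

lemma X666_degCount_zero : degCount X666 0 = 1 := by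
  have : X666.filter (fun m => monDeg m = 0) = {0} := by
    ext m
    simp only [Finset.mem_filter, Finset.mem_singleton]
    constructor
    · rintro ⟨_, h⟩; exact monDeg_eq_zero h
    · rintro rfl
      exact ⟨mem_X666.mpr ⟨0, 0, by omega, (Finsupp.single_zero 0).symm⟩, monDeg_zero⟩
  rw [degCount, this, Finset.card_singleton]

lemma X666_degCount_pos (d : ℕ) (hd1 : 1 ≤ d) (hd3 : d ≤ 3) : degCount X666 d = 6 := by
  have : X666.filter (fun m => monDeg m = d)
      = (Finset.univ : Finset (Fin 6)).image (fun i => Finsupp.single i d) := by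
    ext m
    simp only [Finset.mem_filter, Finset.mem_image]
    constructor
    · rintro ⟨hm, hdeg⟩
      obtain ⟨i, k, hk, rfl⟩ := mem_X666.mp hm
      rw [monDeg_single] at hdeg
      exact ⟨i, Finset.mem_univ _, by rw [hdeg]⟩
    · rintro ⟨i, _, rfl⟩
      exact ⟨mem_X666.mpr ⟨i, d, hd3, rfl⟩, monDeg_single i d⟩
  rw [degCount, this, Finset.card_image_of_injective _
    (Finsupp.single_left_injective (by omega)), Finset.card_univ, Fintype.card_fin]

lemma X666_degCount_big (d : ℕ) (hd : 4 ≤ d) : degCount X666 d = 0 := by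
  rw [degCount, Finset.card_eq_zero, Finset.filter_eq_empty_iff]
  intro m hm
  obtain ⟨i, k, hk, rfl⟩ := mem_X666.mp hm
  rw [monDeg_single]
  omega

lemma pureO_1666 : IsPureOSequence [1, 6, 6, 6] := by
  refine ⟨6, X666, X666_orderIdeal, X666_pure, ?_, ?_, ?_⟩
  · simp
  · intro i
    match i with
    | 0 => simpa using X666_degCount_zero
    | 1 => simpa using X666_degCount_pos 1 (by omega) (by omega)
    | 2 => simpa using X666_degCount_pos 2 (by omega) (by omega)
    | 3 => simpa using X666_degCount_pos 3 (by omega) (by omega)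
    | (n+4) => 
      rw [X666_degCount_big (n+4) (by omega), List.getD_eq_default]
      simp
  · show degCount X666 3 ≠ 0
    rw [X666_degCount_pos 3 (by omega) (by omega)]
    omega

end X666

section X136
open Finsupp

noncomputable def M136 : Fin 3 →₀ ℕ :=
  Finsupp.single 0 2 + Finsupp.single 1 2 + Finsupp.single 2 2

lemma M136_apply (i : Fin 3) : M136 i = 2 := by
  fin_cases i <;> simp [M136, Finsupp.single_apply] <;> decide

noncomputable def X136 : Finset (Fin 3 →₀ ℕ) :=
  (Finset.Iic M136).filter (fun m => monDeg m ≤ 2)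

lemma mem_X136 {m : Fin 3 →₀ ℕ} : m ∈ X136 ↔ monDeg m ≤ 2 := by
  constructor
  · intro hm; exact (Finset.mem_filter.mp hm).2
  · intro h
    refine Finset.mem_filter.mpr ⟨Finset.mem_Iic.mpr ?_, h⟩
    intro i
    rw [M136_apply]
    exact le_trans (apply_le_monDeg m i) h

lemma X136_orderIdeal : IsOrderIdeal X136 := by
  constructor
  · exact ⟨0, mem_X136.mpr (by rw [monDeg_zero]; omega)⟩
  · intro m hm n hn
    exact mem_X136.mpr (le_trans (monDeg_mono hn) (mem_X136.mp hm))

lemma X136_maximal_deg {m : Fin 3 →₀ ℕ} (hm : m ∈ X136)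
    (hmax : ∀ p ∈ X136, m ≤ p → p = m) : monDeg m = 2 := by
  have h2 := mem_X136.mp hm
  rcases Nat.lt_or_ge (monDeg m) 2 with hlt | hge
  · exfalso
    set p := m + Finsupp.single 0 1 with hp
    have hpX : p ∈ X136 := mem_X136.mpr (by rw [hp, monDeg_add, monDeg_single]; omega)
    have hle : m ≤ p := by intro j; exact Nat.le_add_right _ _
    have heq := hmax _ hpX hle
    have := congrArg monDeg heq
    rw [hp, monDeg_add, monDeg_single] at this
    omega
  · omega

lemma X136_pure : IsPureSet X136 := by
  intro m hm n hn hmaxm hmaxn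
  rw [X136_maximal_deg hm hmaxm, X136_maximal_deg hn hmaxn]

lemma X136_degCount_zero : degCount X136 0 = 1 := by
  have : X136.filter (fun m => monDeg m = 0) = {0} := by
    ext m
    simp only [Finset.mem_filter, Finset.mem_singleton]
    constructor
    · rintro ⟨_, h⟩; exact monDeg_eq_zero h
    · rintro rfl
      exact ⟨mem_X136.mpr (by rw [monDeg_zero]; omega), monDeg_zero⟩
  rw [degCount, this, Finset.card_singleton]

lemma X136_degCount_one : degCount X136 1 = 3 := by
  have : X136.filter (fun m => monDeg m = 1)
      = (Finset.univ : Finset (Fin 3)).image (fun i => Finsupp.single i 1) := by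
    ext m
    simp only [Finset.mem_filter, Finset.mem_image]
    constructor
    · rintro ⟨hm, hdeg⟩
      obtain ⟨v, rfl⟩ := deg_one_class hdeg
      exact ⟨v, Finset.mem_univ _, rfl⟩
    · rintro ⟨i, _, rfl⟩
      exact ⟨mem_X136.mpr (by rw [monDeg_single]; omega), monDeg_single i 1⟩
  rw [degCount, this, Finset.card_image_of_injective _
    (Finsupp.single_left_injective (by omega)), Finset.card_univ, Fintype.card_fin]

noncomputable def E2set : Finset (Fin 3 →₀ ℕ) :=
  { Finsupp.single 0 1 + Finsupp.single 1 1,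
    Finsupp.single 0 1 + Finsupp.single 2 1,
    Finsupp.single 1 1 + Finsupp.single 2 1 }

lemma X136_degCount_two : degCount X136 2 = 6 := by
  have hset : X136.filter (fun m => monDeg m = 2)
      = ((Finset.univ : Finset (Fin 3)).image (fun i => Finsupp.single i 2)) ∪ E2set := by
    ext m
    simp only [Finset.mem_filter, Finset.mem_union, Finset.mem_image]
    constructor
    · rintro ⟨hm, hdeg⟩
      have hc1 := card_support_le_monDeg m
      have hc2 : m.support.Nonempty := support_nonempty_of_deg (by omega)
      have hc3 := Finset.card_pos.mpr hc2
      rcases (show m.support.card = 1 ∨ m.support.card = 2 by omega) with hc | hc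
      · obtain ⟨v, rfl⟩ := deg2_card1_class hdeg hc
        exact Or.inl ⟨v, Finset.mem_univ _, rfl⟩
      · obtain ⟨x, y, hxy, rfl⟩ := deg2_card2_class hdeg hc
        right
        fin_cases x <;> fin_cases y <;> simp_all [E2set] <;>
          first
            | rfl
            | (left; apply add_comm)
            | (right; left; apply add_comm)
            | (right; right; apply add_comm)
    · intro hm
      rcases hm with ⟨i, _, rfl⟩ | hm
      · exact ⟨mem_X136.mpr (by rw [monDeg_single]), monDeg_single i 2⟩
      · have : monDeg m = 2 := by
          simp only [E2set, Finset.mem_insert, Finset.mem_singleton] at hm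
          rcases hm with rfl | rfl | rfl <;> exact deg_pair _ _
        exact ⟨mem_X136.mpr (by omega), this⟩
  rw [degCount, hset, Finset.card_union_of_disjoint, Finset.card_image_of_injective _
    (Finsupp.single_left_injective (by omega)), Finset.card_univ, Fintype.card_fin]
  · have h01 : (0 : Fin 3) ≠ 1 := by decide
    have h02 : (0 : Fin 3) ≠ 2 := by decide
    have h12 : (1 : Fin 3) ≠ 2 := by decide
    have d1 : (Finsupp.single (0:Fin 3) 1 + Finsupp.single (1:Fin 3) 1)
        ≠ (Finsupp.single 0 1 + Finsupp.single 2 1) := by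
      intro h
      have := DFunLike.congr_fun h (1 : Fin 3)
      rw [pair_apply, pair_apply] at this
      simp at this
    have d2 : (Finsupp.single (0:Fin 3) 1 + Finsupp.single (1:Fin 3) 1)
        ≠ (Finsupp.single 1 1 + Finsupp.single 2 1) := by
      intro h
      have := DFunLike.congr_fun h (0 : Fin 3)
      rw [pair_apply, pair_apply] at this
      simp at this
    have d3 : (Finsupp.single (0:Fin 3) 1 + Finsupp.single (2:Fin 3) 1)
        ≠ (Finsupp.single 1 1 + Finsupp.single 2 1) := by
      intro h
      have := DFunLike.congr_fun h (0 : Fin 3)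
      rw [pair_apply, pair_apply] at this
      simp at this
    rw [E2set, Finset.card_insert_of_notMem (by simp [d1, d2]),
      Finset.card_insert_of_notMem (by simp [d3]), Finset.card_singleton]
  · rw [Finset.disjoint_left]
    intro m h1 h2
    obtain ⟨i, _, rfl⟩ := Finset.mem_image.mp h1
    simp only [E2set, Finset.mem_insert, Finset.mem_singleton] at h2
    rcases h2 with h | h | h <;>
    · have hcard := congrArg (fun f : Fin 3 →₀ ℕ => f.support.card) h
      simp only [Finsupp.support_single_ne_zero _ (by omega : (2:ℕ) ≠ 0),
        Finset.card_singleton] at hcard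
      rw [supp_pair (by decide), Finset.card_pair (by decide)] at hcard
      omega

lemma X136_degCount_big (d : ℕ) (hd : 3 ≤ d) : degCount X136 d = 0 := by
  rw [degCount, Finset.card_eq_zero, Finset.filter_eq_empty_iff]
  intro m hm
  have := mem_X136.mp hm
  omega

lemma pureO_136 : IsPureOSequence [1, 3, 6] := by
  refine ⟨3, X136, X136_orderIdeal, X136_pure, ?_, ?_, ?_⟩
  · simp
  · intro i
    match i with
    | 0 => simpa using X136_degCount_zero
    | 1 => simpa using X136_degCount_one
    | 2 => simpa using X136_degCount_two
    | (n+3) =>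
      rw [X136_degCount_big (n+3) (by omega), List.getD_eq_default]
      simp
  · show degCount X136 2 ≠ 0
    rw [X136_degCount_two]
    omega

end X136

open Finsupp in
lemma pair_eq_cases {r : ℕ} {x y x' y' : Fin r} (hxy : x ≠ y) (hxy' : x' ≠ y')
    (h : (single x 1 + single y 1 : Fin r →₀ ℕ) = single x' 1 + single y' 1) :
    (x = x' ∧ y = y') ∨ (x = y' ∧ y = x') := by
  by_cases hxx : x = x'
  · left
    refine ⟨hxx, ?_⟩
    have hy := DFunLike.congr_fun h y
    rw [pair_apply, pair_apply] at hy
    subst hxx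
    rw [if_neg hxy, if_pos rfl] at hy
    by_cases hyy : y' = y
    · exact hyy.symm
    · rw [if_neg hyy] at hy; omega
  · right
    have hx := DFunLike.congr_fun h x
    rw [pair_apply, pair_apply] at hx
    rw [if_pos rfl, if_neg (fun hh : y = x => hxy hh.symm),
      if_neg (fun hh : x' = x => hxx hh.symm)] at hx
    have hyx : y' = x := by
      by_cases hyx : y' = x
      · exact hyx
      · rw [if_neg hyx] at hx; omega
    have hx' := DFunLike.congr_fun h x'
    rw [pair_apply, pair_apply] at hx'
    rw [if_pos rfl, if_neg (fun hh : y' = x' => hxy' hh.symm), if_neg hxx] at hx'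
    have hyx' : y = x' := by
      by_cases hyy : y = x'
      · exact hyy
      · rw [if_neg hyy] at hx'; omega
    exact ⟨hyx.symm, hyx'⟩

lemma card_six_pairs {γ : Type*} [DecidableEq γ] {a b c : γ}
    (hab : a ≠ b) (hac : a ≠ c) (hbc : b ≠ c) :
    ({(a,b), (a,c), (b,a), (b,c), (c,a), (c,b)} : Finset (γ × γ)).card = 6 := by
  rw [Finset.card_insert_of_notMem (by simp [Prod.ext_iff, hab, hac, hbc, Ne.symm hab, Ne.symm hac, Ne.symm hbc]),
    Finset.card_insert_of_notMem (by simp [Prod.ext_iff, hab, hac, hbc, Ne.symm hab, Ne.symm hac, Ne.symm hbc]),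
    Finset.card_insert_of_notMem (by simp [Prod.ext_iff, hab, hac, hbc, Ne.symm hab, Ne.symm hac, Ne.symm hbc]),
    Finset.card_insert_of_notMem (by simp [Prod.ext_iff, hab, hac, hbc, Ne.symm hab, Ne.symm hac, Ne.symm hbc]),
    Finset.card_insert_of_notMem (by simp [Prod.ext_iff, hab, hac, hbc, Ne.symm hab, Ne.symm hac, Ne.symm hbc]),
    Finset.card_singleton]

lemma card_six_triples {γ : Type*} [DecidableEq γ] {a b c : γ}
    (hab : a ≠ b) (hac : a ≠ c) (hbc : b ≠ c) :
    ({(a,(b,c)), (a,(c,b)), (b,(a,c)), (b,(c,a)), (c,(a,b)), (c,(b,a))}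
      : Finset (γ × γ × γ)).card = 6 := by
  rw [Finset.card_insert_of_notMem (by simp [Prod.ext_iff, hab, hac, hbc, Ne.symm hab, Ne.symm hac, Ne.symm hbc]),
    Finset.card_insert_of_notMem (by simp [Prod.ext_iff, hab, hac, hbc, Ne.symm hab, Ne.symm hac, Ne.symm hbc]),
    Finset.card_insert_of_notMem (by simp [Prod.ext_iff, hab, hac, hbc, Ne.symm hab, Ne.symm hac, Ne.symm hbc]),
    Finset.card_insert_of_notMem (by simp [Prod.ext_iff, hab, hac, hbc, Ne.symm hab, Ne.symm hac, Ne.symm hbc]),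
    Finset.card_insert_of_notMem (by simp [Prod.ext_iff, hab, hac, hbc, Ne.symm hab, Ne.symm hac, Ne.symm hbc]),
    Finset.card_singleton]

lemma exists_lt_coord {r : ℕ} {m p : Fin r →₀ ℕ} (hle : m ≤ p) (hne : p ≠ m) :
    ∃ i, m i < p i := by
  by_contra hall
  push_neg at hall
  exact hne (by ext i; exact le_antisymm (hall i) (hle i))

lemma add_single_le {r : ℕ} {m p : Fin r →₀ ℕ} (hle : m ≤ p) {i : Fin r} (hi : m i < p i) :
    m + Finsupp.single i 1 ≤ p := by
  intro j
  rcases eq_or_ne j i with rfl | hne'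
  · rw [Finsupp.add_apply, Finsupp.single_apply, if_pos rfl]
    omega
  · simp only [Finsupp.add_apply, Finsupp.single_apply,
      if_neg (fun h : i = j => hne' h.symm), Nat.add_zero]
    exact hle j


lemma key_arith (a b t1 t2 t3 al : ℕ) (h1 : t1 ≤ al) (h1' : t1 ≤ a*a - a)
    (h2 : t2 ≤ a*b) (h3 : t3 ≤ b*b - b) (hbud : 2*a + b + al ≤ 6) (hcov : 1 ≤ a ∨ 2 ≤ b) :
    3*t1 + 3*t2 + t3 + 6 ≤ 6*a + 6*b := by
  have ha : a ≤ 3 := by omega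
  have hb : b ≤ 6 := by omega
  interval_cases a <;> interval_cases b <;> omega

open Finsupp in
lemma squarefree_triple {r : ℕ} {m : Fin r →₀ ℕ} {a b c : Fin r}
    (hab : a ≠ b) (hac : a ≠ c) (hbc : b ≠ c)
    (hdeg : monDeg m = 3) (hsupp : m.support = {a, b, c}) :
    m = single a 1 + single b 1 + single c 1 := by
  classical
  have hcard : m.support.card = 3 := by
    rw [hsupp, Finset.card_insert_of_notMem (by simp [hab, hac]),
      Finset.card_insert_of_notMem (by simp [hbc]), Finset.card_singleton]
  have hvals := deg3_card3_class hdeg hcard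
  exact triple_ext hab hac hbc hsupp
    (hvals a (by rw [hsupp]; simp)) (hvals b (by rw [hsupp]; simp))
    (hvals c (by rw [hsupp]; simp))

open Finsupp in
lemma tri_swap12 {r : ℕ} (x y u : Fin r) :
    (single x 1 + single y 1 + single u 1 : Fin r →₀ ℕ)
      = single y 1 + single x 1 + single u 1 := by
  rw [add_comm (single x 1) (single y 1)]

open Finsupp in
lemma tri_rot {r : ℕ} (x y u : Fin r) :
    (single x 1 + single y 1 + single u 1 : Fin r →₀ ℕ)
      = single x 1 + single u 1 + single y 1 := by
  rw [add_right_comm]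

open Finsupp in
lemma pair_le_tri_12 {r : ℕ} (x y u : Fin r) :
    (single x 1 + single y 1 : Fin r →₀ ℕ) ≤ single x 1 + single y 1 + single u 1 :=
  self_le_add_right _ _

open Finsupp in
lemma pair_le_tri_1u {r : ℕ} (x y u : Fin r) :
    (single x 1 + single u 1 : Fin r →₀ ℕ) ≤ single x 1 + single y 1 + single u 1 := by
  rw [tri_rot]
  exact self_le_add_right _ _

open Finsupp in
lemma pair_le_tri_2u {r : ℕ} (x y u : Fin r) :
    (single y 1 + single u 1 : Fin r →₀ ℕ) ≤ single x 1 + single y 1 + single u 1 := by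
  rw [tri_swap12]
  exact pair_le_tri_1u y x u

set_option maxHeartbeats 2000000 in
theorem not_pure_17912 : ¬ IsPureOSequence [1, 7, 9, 12] := by
  classical
  rintro ⟨r, X, ⟨hXne, hdown⟩, hpure, -, hdeg, -⟩
  have hd1 : (X.filter (fun m => monDeg m = 1)).card = 7 := by simpa [degCount] using hdeg 1
  have hd2 : (X.filter (fun m => monDeg m = 2)).card = 9 := by simpa [degCount] using hdeg 2
  have hd3 : (X.filter (fun m => monDeg m = 3)).card = 12 := by simpa [degCount] using hdeg 3
  have hdbig : ∀ k, 4 ≤ k → (X.filter (fun m => monDeg m = k)).card = 0 := by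
    intro k hk
    have h := hdeg k
    rw [List.getD_eq_default _ _ (by simp; omega)] at h
    simpa [degCount] using h
  have hdeg_le3 : ∀ m ∈ X, monDeg m ≤ 3 := by
    intro m hm
    by_contra hgt
    have h0 := hdbig (monDeg m) (by omega)
    rw [Finset.card_eq_zero] at h0
    have : m ∈ X.filter (fun m' => monDeg m' = monDeg m) := Finset.mem_filter.mpr ⟨hm, rfl⟩
    rw [h0] at this
    exact Finset.notMem_empty m this
  have hmax3 : ∀ n ∈ X, monDeg n = 3 → ∀ p ∈ X, n ≤ p → p = n := by
    intro n hn h3 p hp hle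
    by_contra hne
    obtain ⟨i, hi⟩ := exists_lt_coord hle hne
    have h4 := monDeg_mono (add_single_le hle hi)
    rw [monDeg_add, monDeg_single, h3] at h4
    have := hdeg_le3 p hp
    omega
  have hsucc : ∀ m ∈ X, monDeg m ≤ 2 → ∃ p ∈ X, m ≤ p ∧ monDeg p = monDeg m + 1 := by
    intro m hm hm2
    have h3ne : (X.filter (fun m' => monDeg m' = 3)).Nonempty := by
      rw [← Finset.card_pos, hd3]; omega
    obtain ⟨n, hn⟩ := h3ne
    rw [Finset.mem_filter] at hn
    have hmnotmax : ¬ (∀ p ∈ X, m ≤ p → p = m) := by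
      intro hmax
      have := hpure m hm n hn.1 hmax (hmax3 n hn.1 hn.2)
      omega
    push_neg at hmnotmax
    obtain ⟨p, hp, hlep, hpne⟩ := hmnotmax
    obtain ⟨i, hi⟩ := exists_lt_coord hlep hpne
    refine ⟨m + Finsupp.single i 1, hdown p hp _ (add_single_le hlep hi), ?_, ?_⟩
    · intro j; rw [Finsupp.add_apply]; exact Nat.le_add_right _ _
    · rw [monDeg_add, monDeg_single]
  -- the vertex set
  set V := (X.filter (fun m => monDeg m = 1)).biUnion Finsupp.support with hVdef
  have hmemV : ∀ v, v ∈ V ↔ Finsupp.single v 1 ∈ X := by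
    intro v
    constructor
    · intro hv
      obtain ⟨m, hm, hvm⟩ := Finset.mem_biUnion.mp hv
      rw [Finset.mem_filter] at hm
      obtain ⟨w, rfl⟩ := deg_one_class hm.2
      rw [Finsupp.support_single_ne_zero _ (by omega), Finset.mem_singleton] at hvm
      rw [hvm]
      exact hm.1
    · intro hv
      refine Finset.mem_biUnion.mpr ⟨Finsupp.single v 1,
        Finset.mem_filter.mpr ⟨hv, monDeg_single v 1⟩, ?_⟩
      rw [Finsupp.support_single_ne_zero _ (by omega)]
      exact Finset.mem_singleton_self v
  have hVcard : V.card = 7 := by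
    have himg : X.filter (fun m => monDeg m = 1) = V.image (fun v => Finsupp.single v 1) := by
      ext m
      rw [Finset.mem_filter, Finset.mem_image]
      constructor
      · rintro ⟨hm, hdeg1⟩
        obtain ⟨v, rfl⟩ := deg_one_class hdeg1
        exact ⟨v, (hmemV v).mpr hm, rfl⟩
      · rintro ⟨v, hv, rfl⟩
        exact ⟨(hmemV v).mp hv, monDeg_single v 1⟩
    rw [himg, Finset.card_image_of_injective _ (Finsupp.single_left_injective (by omega))] at hd1
    exact hd1
  have hsuppV : ∀ m ∈ X, ∀ v ∈ m.support, v ∈ V := by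
    intro m hm v hv
    rw [hmemV]
    refine hdown m hm _ (single_le_of_apply m v 1 ?_)
    have := Finsupp.mem_support_iff.mp hv
    omega
  have hcover : ∀ v ∈ V, ∃ m ∈ X, monDeg m = 3 ∧ 1 ≤ m v := by
    intro v hv
    have h1 : Finsupp.single v 1 ∈ X := (hmemV v).mp hv
    obtain ⟨p2, hp2, hle2, hdeg2⟩ := hsucc _ h1 (by rw [monDeg_single]; omega)
    rw [monDeg_single] at hdeg2
    obtain ⟨p3, hp3, hle3, hdeg3⟩ := hsucc _ hp2 (by omega)
    rw [hdeg2] at hdeg3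
    refine ⟨p3, hp3, hdeg3, ?_⟩
    have h1v : (Finsupp.single v 1 : Fin r →₀ ℕ) v = 1 := by simp
    have := le_trans (hle2 v) (hle3 v)
    omega
  -- Part B : loops, outside vertices, ordered edge pairs
  set L := V.filter (fun x => Finsupp.single x 2 ∈ X) with hLdef
  set W := V \ L with hWdef
  have hLV : L ⊆ V := Finset.filter_subset _ _
  have hWV : W ⊆ V := Finset.sdiff_subset
  have hcardLW : L.card + W.card = 7 := by
    rw [hWdef, Finset.card_sdiff_of_subset hLV, hVcard]
    have := Finset.card_le_card hLV
    rw [hVcard] at this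
    omega
  have hmemL : ∀ x, x ∈ L ↔ x ∈ V ∧ Finsupp.single x 2 ∈ X := fun x => Finset.mem_filter
  have hmemW : ∀ x, x ∈ W ↔ x ∈ V ∧ x ∉ L := fun x => Finset.mem_sdiff
  have hLWdisj : ∀ x, x ∈ L → x ∈ W → False := by
    intro x hx hw
    exact ((hmemW x).mp hw).2 hx
  set OP := (V ×ˢ V).filter
      (fun p => p.1 ≠ p.2 ∧ (Finsupp.single p.1 1 + Finsupp.single p.2 1) ∈ X) with hOPdef
  have hmemOP : ∀ p : Fin r × Fin r, p ∈ OP ↔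
      (p.1 ∈ V ∧ p.2 ∈ V) ∧ p.1 ≠ p.2 ∧ (Finsupp.single p.1 1 + Finsupp.single p.2 1) ∈ X := by
    intro p
    rw [hOPdef, Finset.mem_filter, Finset.mem_product]
  set OLL := OP.filter (fun p => p.1 ∈ L ∧ p.2 ∈ L) with hOLLdef
  set OLW := OP.filter (fun p => p.1 ∈ L ∧ p.2 ∈ W) with hOLWdef
  set OWL := OP.filter (fun p => p.1 ∈ W ∧ p.2 ∈ L) with hOWLdef
  set OWW := OP.filter (fun p => p.1 ∈ W ∧ p.2 ∈ W) with hOWWdef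
  have hLorW : ∀ v ∈ V, v ∈ L ∨ v ∈ W := by
    intro v hv
    by_cases h : v ∈ L
    · exact Or.inl h
    · exact Or.inr ((hmemW v).mpr ⟨hv, h⟩)
  have hOPsplit : OP.card = OLL.card + OLW.card + OWL.card + OWW.card := by
    have h1 : OP = (OLL ∪ OLW) ∪ (OWL ∪ OWW) := by
      ext p
      simp only [hOLLdef, hOLWdef, hOWLdef, hOWWdef, Finset.mem_union, Finset.mem_filter]
      constructor
      · intro hp
        have hp1 : p.1 ∈ V := ((hmemOP p).mp hp).1.1
        have hp2 : p.2 ∈ V := ((hmemOP p).mp hp).1.2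
        rcases hLorW _ hp1 with h1 | h1 <;> rcases hLorW _ hp2 with h2 | h2 <;> tauto
      · tauto
    have d1 : Disjoint OLL OLW := by
      rw [Finset.disjoint_left]
      intro p h1 h2
      rw [hOLLdef, Finset.mem_filter] at h1
      rw [hOLWdef, Finset.mem_filter] at h2
      exact hLWdisj _ h1.2.2 h2.2.2
    have d2 : Disjoint OWL OWW := by
      rw [Finset.disjoint_left]
      intro p h1 h2
      rw [hOWLdef, Finset.mem_filter] at h1
      rw [hOWWdef, Finset.mem_filter] at h2
      exact hLWdisj _ h1.2.2 h2.2.2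
    have d3 : Disjoint (OLL ∪ OLW) (OWL ∪ OWW) := by
      rw [Finset.disjoint_left]
      intro p h1 h2
      have hp1L : p.1 ∈ L := by
        rcases Finset.mem_union.mp h1 with h | h <;>
          exact (Finset.mem_filter.mp h).2.1
      have hp1W : p.1 ∈ W := by
        rcases Finset.mem_union.mp h2 with h | h <;>
          exact (Finset.mem_filter.mp h).2.1
      exact hLWdisj _ hp1L hp1W
    rw [h1, Finset.card_union_of_disjoint d3, Finset.card_union_of_disjoint d1,
      Finset.card_union_of_disjoint d2]
    ring
  have hOLWOWL : OLW.card = OWL.card := by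
    apply Finset.card_bij (fun p _ => (p.2, p.1))
    · intro p hp
      rw [hOLWdef, Finset.mem_filter] at hp
      obtain ⟨hop, h1, h2⟩ := hp
      rw [hmemOP] at hop
      rw [hOWLdef, Finset.mem_filter, hmemOP]
      refine ⟨⟨⟨hop.1.2, hop.1.1⟩, Ne.symm hop.2.1, ?_⟩, h2, h1⟩
      rw [add_comm]
      exact hop.2.2
    · intro p hp q hq hpq
      have h1 := congrArg Prod.fst hpq
      have h2 := congrArg Prod.snd hpq
      simp at h1 h2
      exact Prod.ext h2 h1
    · intro p hp
      refine ⟨(p.2, p.1), ?_, rfl⟩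
      rw [hOWLdef, Finset.mem_filter] at hp
      obtain ⟨hop, h1, h2⟩ := hp
      rw [hmemOP] at hop
      rw [hOLWdef, Finset.mem_filter, hmemOP]
      refine ⟨⟨⟨hop.1.2, hop.1.1⟩, Ne.symm hop.2.1, ?_⟩, h2, h1⟩
      rw [add_comm]
      exact hop.2.2
  -- global budget: 2ℓ + |OP| ≤ 18
  have hbudget : 2 * L.card + OP.card ≤ 18 := by
    set Lm := L.image (fun x => Finsupp.single x 2) with hLmdef
    set Em := OP.image (fun p => Finsupp.single p.1 1 + Finsupp.single p.2 1) with hEmdef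
    have hLmcard : Lm.card = L.card :=
      Finset.card_image_of_injective _ (Finsupp.single_left_injective (by omega))
    have hLmsub : Lm ⊆ X.filter (fun m => monDeg m = 2) := by
      intro m hm
      obtain ⟨x, hx, rfl⟩ := Finset.mem_image.mp hm
      exact Finset.mem_filter.mpr ⟨((hmemL x).mp hx).2, monDeg_single x 2⟩
    have hEmsub : Em ⊆ X.filter (fun m => monDeg m = 2) := by
      intro m hm
      obtain ⟨p, hp, rfl⟩ := Finset.mem_image.mp hm
      exact Finset.mem_filter.mpr ⟨((hmemOP p).mp hp).2.2, deg_pair _ _⟩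
    have hdisj : Disjoint Lm Em := by
      rw [Finset.disjoint_left]
      intro m h1 h2
      obtain ⟨x, hx, rfl⟩ := Finset.mem_image.mp h1
      obtain ⟨p, hp, hpm⟩ := Finset.mem_image.mp h2
      have hpne := ((hmemOP p).mp hp).2.1
      have hcard : (Finsupp.single p.1 1 + Finsupp.single p.2 1 : Fin r →₀ ℕ).support.card
          = (Finsupp.single x 2 : Fin r →₀ ℕ).support.card := by rw [hpm]
      rw [supp_pair hpne, Finset.card_pair hpne,
        Finsupp.support_single_ne_zero _ (by omega : (2:ℕ) ≠ 0), Finset.card_singleton] at hcard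
      omega
    have hcards : Lm.card + Em.card ≤ 9 := by
      rw [← Finset.card_union_of_disjoint hdisj, ← hd2]
      exact Finset.card_le_card (Finset.union_subset hLmsub hEmsub)
    have hOPle : OP.card ≤ 2 * Em.card := by
      rw [Finset.card_eq_sum_card_fiberwise
        (fun p hp => Finset.mem_image_of_mem (fun p => Finsupp.single p.1 1 + Finsupp.single p.2 1) hp)]
      have : ∀ m ∈ Em, (OP.filter
          (fun p => Finsupp.single p.1 1 + Finsupp.single p.2 1 = m)).card ≤ 2 := by
        intro m hm
        obtain ⟨q, hq, hqm⟩ := Finset.mem_image.mp hm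
        have hqne := ((hmemOP q).mp hq).2.1
        have hsub : OP.filter (fun p => Finsupp.single p.1 1 + Finsupp.single p.2 1 = m)
            ⊆ {q, (q.2, q.1)} := by
          intro p hp
          rw [Finset.mem_filter] at hp
          have hpne := ((hmemOP p).mp hp.1).2.1
          have heq : (Finsupp.single p.1 1 + Finsupp.single p.2 1 : Fin r →₀ ℕ)
              = Finsupp.single q.1 1 + Finsupp.single q.2 1 := by rw [hp.2, ← hqm]
          rcases pair_eq_cases hpne hqne heq with ⟨h1, h2⟩ | ⟨h1, h2⟩
          · simp [Prod.ext_iff, h1, h2]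
          · simp [Prod.ext_iff, h1, h2]
        calc (OP.filter (fun p => Finsupp.single p.1 1 + Finsupp.single p.2 1 = m)).card
            ≤ ({q, (q.2, q.1)} : Finset (Fin r × Fin r)).card := Finset.card_le_card hsub
          _ ≤ 2 := Finset.card_insert_le _ _ |>.trans (by simp)
      calc ∑ m ∈ Em, (OP.filter (fun p => Finsupp.single p.1 1 + Finsupp.single p.2 1 = m)).card
          ≤ ∑ m ∈ Em, 2 := Finset.sum_le_sum this
        _ = 2 * Em.card := by rw [Finset.sum_const, smul_eq_mul, mul_comm]
    omega
  -- Part C : per-vertex degrees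
  set Db := fun u => (L.filter
    (fun x => x ≠ u ∧ (Finsupp.single x 1 + Finsupp.single u 1) ∈ X)).card with hDbdef
  set Dc := fun u => (W.filter
    (fun x => x ≠ u ∧ (Finsupp.single x 1 + Finsupp.single u 1) ∈ X)).card with hDcdef
  have hfib : ∀ (A : Finset (Fin r)), A ⊆ V → ∀ u ∈ W,
      ((OP.filter (fun p => p.1 ∈ A ∧ p.2 ∈ W)).filter (fun p => p.2 = u)).card
        = (A.filter (fun x => x ≠ u ∧ (Finsupp.single x 1 + Finsupp.single u 1) ∈ X)).card := by
    intro A hAV u hu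
    apply Finset.card_bij (fun p _ => p.1)
    · intro p hp
      rw [Finset.mem_filter, Finset.mem_filter] at hp
      obtain ⟨⟨hop, hp1, _⟩, hp2⟩ := hp
      rw [hmemOP] at hop
      rw [Finset.mem_filter]
      refine ⟨hp1, ?_, ?_⟩
      · rw [← hp2]; exact hop.2.1
      · rw [← hp2]; exact hop.2.2
    · intro p hp q hq hpq
      rw [Finset.mem_filter] at hp hq
      exact Prod.ext hpq (hp.2.trans hq.2.symm)
    · intro x hx
      rw [Finset.mem_filter] at hx
      refine ⟨(x, u), ?_, rfl⟩
      rw [Finset.mem_filter, Finset.mem_filter, hmemOP]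
      exact ⟨⟨⟨⟨hAV hx.1, hWV hu⟩, hx.2.1, hx.2.2⟩, hx.1, hu⟩, rfl⟩
  have hDbsum : ∑ u ∈ W, Db u = OLW.card := by
    rw [hOLWdef]
    rw [Finset.card_eq_sum_card_fiberwise (f := Prod.snd) (t := W)
      (fun p hp => (Finset.mem_filter.mp hp).2.2)]
    exact Finset.sum_congr rfl (fun u hu => (hfib L hLV u hu).symm)
  have hDcsum : ∑ u ∈ W, Dc u = OWW.card := by
    rw [hOWWdef]
    rw [Finset.card_eq_sum_card_fiberwise (f := Prod.snd) (t := W)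
      (fun p hp => (Finset.mem_filter.mp hp).2.2)]
    exact Finset.sum_congr rfl (fun u hu => (hfib W hWV u hu).symm)
  -- coverage pointwise
  have hcov2 : ∀ u ∈ W, 1 ≤ Db u ∨ 2 ≤ Dc u := by
    intro u hu
    have huV : u ∈ V := hWV hu
    have huL : u ∉ L := ((hmemW u).mp hu).2
    obtain ⟨m, hm, hm3, hmu⟩ := hcover u huV
    have hkey : ∀ x y : Fin r, x ≠ y → x ≠ u → y ≠ u → x ∈ m.support → y ∈ m.support →
        1 ≤ Db u ∨ 2 ≤ Dc u := by
      intro x y hxy hxu hyu hxs hys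
      have hxV : x ∈ V := hsuppV m hm x hxs
      have hyV : y ∈ V := hsuppV m hm y hys
      have hxe : (Finsupp.single x 1 + Finsupp.single u 1) ∈ X :=
        hdown m hm _ (pair_le hxu (by have := Finsupp.mem_support_iff.mp hxs; omega) hmu)
      have hye : (Finsupp.single y 1 + Finsupp.single u 1) ∈ X :=
        hdown m hm _ (pair_le hyu (by have := Finsupp.mem_support_iff.mp hys; omega) hmu)
      rcases hLorW x hxV with hxL | hxW
      · left
        exact Finset.card_pos.mpr ⟨x, Finset.mem_filter.mpr ⟨hxL, hxu, hxe⟩⟩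
      · rcases hLorW y hyV with hyL | hyW
        · left
          exact Finset.card_pos.mpr ⟨y, Finset.mem_filter.mpr ⟨hyL, hyu, hye⟩⟩
        · right
          have hsub : ({x, y} : Finset (Fin r)) ⊆ W.filter
              (fun z => z ≠ u ∧ (Finsupp.single z 1 + Finsupp.single u 1) ∈ X) := by
            intro z hz
            rcases Finset.mem_insert.mp hz with rfl | hz
            · exact Finset.mem_filter.mpr ⟨hxW, hxu, hxe⟩
            · rw [Finset.mem_singleton] at hz
              subst hz
              exact Finset.mem_filter.mpr ⟨hyW, hyu, hye⟩
          calc 2 = ({x, y} : Finset (Fin r)).card := (Finset.card_pair hxy).symm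
            _ ≤ Dc u := Finset.card_le_card hsub
    have hus : u ∈ m.support := Finsupp.mem_support_iff.mpr (by omega)
    have hsc1 : 1 ≤ m.support.card := Finset.card_pos.mpr ⟨u, hus⟩
    have hsc3 : m.support.card ≤ 3 := le_trans (card_support_le_monDeg m) (by omega)
    rcases (show m.support.card = 1 ∨ m.support.card = 2 ∨ m.support.card = 3 by omega)
      with hsc | hsc | hsc
    · exfalso
      obtain ⟨v, rfl⟩ := deg3_card1_class hm3 hsc
      have : u = v := by
        rw [Finsupp.support_single_ne_zero _ (by omega), Finset.mem_singleton] at hus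
        exact hus
      subst this
      exact huL ((hmemL u).mpr ⟨huV, hdown _ hm _ (single_le_of_apply _ u 2 (by simp))⟩)
    · obtain ⟨x, y, hxy, hx2, hy1, hmeq⟩ := deg3_card2_class hm3 hsc
      have hxs : x ∈ m.support := Finsupp.mem_support_iff.mpr (by omega)
      have hys : y ∈ m.support := Finsupp.mem_support_iff.mpr (by omega)
      have hsupp : m.support = {x, y} := eq_pair_support hxy (by omega) (by omega) hsc
      rcases (by rw [hsupp] at hus; simpa using hus : u = x ∨ u = y) with rfl | rfl
      · exfalso
        exact huL ((hmemL u).mpr ⟨huV, hdown _ hm _ (single_le_of_apply _ u 2 (by omega))⟩)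
      · left
        have hxL : x ∈ L := (hmemL x).mpr
          ⟨hsuppV m hm x hxs, hdown _ hm _ (single_le_of_apply _ x 2 (by omega))⟩
        have hxe : (Finsupp.single x 1 + Finsupp.single u 1) ∈ X :=
          hdown m hm _ (pair_le hxy (by omega) (by omega))
        exact Finset.card_pos.mpr ⟨x, Finset.mem_filter.mpr ⟨hxL, hxy, hxe⟩⟩
    · obtain ⟨a, b, c, hab, hac, hbc, hsupp⟩ := Finset.card_eq_three.mp hsc
      have ha : a ∈ m.support := by rw [hsupp]; simp
      have hb : b ∈ m.support := by rw [hsupp]; simp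
      have hc : c ∈ m.support := by rw [hsupp]; simp
      rcases (by rw [hsupp] at hus; simpa using hus : u = a ∨ u = b ∨ u = c) with rfl | rfl | rfl
      · exact hkey b c hbc (Ne.symm hab) (Ne.symm hac) hb hc
      · exact hkey a c hac hab (Ne.symm hbc) ha hc
      · exact hkey a b hab hac hbc ha hb
  -- budget pointwise
  have hbud2 : ∀ u ∈ W, 2 * Db u + Dc u + OLL.card ≤ 6 := by
    intro u hu
    have hsumW : ∑ u' ∈ W, (2 * Db u' + Dc u') = 2 * OLW.card + OWW.card := by
      rw [Finset.sum_add_distrib, ← Finset.mul_sum, hDbsum, hDcsum]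
    rw [← Finset.add_sum_erase _ _ hu] at hsumW
    have hlow : (W.erase u).card • 2 ≤ ∑ u' ∈ W.erase u, (2 * Db u' + Dc u') := by
      apply Finset.card_nsmul_le_sum
      intro x hx
      have := hcov2 x (Finset.mem_of_mem_erase hx)
      omega
    rw [Finset.card_erase_of_mem hu, smul_eq_mul] at hlow
    have hWcard : 1 ≤ W.card := Finset.card_pos.mpr ⟨u, hu⟩
    omega
  -- Part D : the degree-3 elements
  set X3 := X.filter (fun m => monDeg m = 3) with hX3def
  have hmemX3 : ∀ m, m ∈ X3 ↔ m ∈ X ∧ monDeg m = 3 := fun m => Finset.mem_filter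
  set S1 := X3.filter (fun m => m.support.card = 1) with hS1def
  set S2m := X3.filter (fun m => m.support.card = 2) with hS2def
  set S3m := X3.filter (fun m => m.support.card = 3) with hS3def
  have hX3split : X3.card ≤ S1.card + S2m.card + S3m.card := by
    have hsub : X3 ⊆ S1 ∪ S2m ∪ S3m := by
      intro m hm
      have hm' := (hmemX3 m).mp hm
      have h1 : 1 ≤ m.support.card := by
        apply Finset.card_pos.mpr
        apply support_nonempty_of_deg
        omega
      have h3 : m.support.card ≤ 3 := le_trans (card_support_le_monDeg m) (by omega)
      simp only [Finset.mem_union, hS1def, hS2def, hS3def, Finset.mem_filter]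
      rcases (show m.support.card = 1 ∨ m.support.card = 2 ∨ m.support.card = 3 by omega)
        with h | h | h <;> tauto
    calc X3.card ≤ (S1 ∪ S2m ∪ S3m).card := Finset.card_le_card hsub
      _ ≤ (S1 ∪ S2m).card + S3m.card := Finset.card_union_le _ _
      _ ≤ S1.card + S2m.card + S3m.card := by
          have := Finset.card_union_le S1 S2m
          omega
  have hS1L : S1.card ≤ L.card := by
    have hsub : S1 ⊆ L.image (fun v => Finsupp.single v 3) := by
      intro m hm
      rw [hS1def, Finset.mem_filter] at hm
      obtain ⟨hm3, hsc⟩ := hm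
      rw [hmemX3] at hm3
      obtain ⟨v, rfl⟩ := deg3_card1_class hm3.2 hsc
      have hvV : v ∈ V := hsuppV _ hm3.1 v
        (by rw [Finsupp.support_single_ne_zero _ (by omega)]; simp)
      have hvL : v ∈ L := (hmemL v).mpr
        ⟨hvV, hdown _ hm3.1 _ (single_le_of_apply _ v 2 (by simp))⟩
      exact Finset.mem_image_of_mem _ hvL
    exact le_trans (Finset.card_le_card hsub) (Finset.card_image_le)
  have hS2c : S2m.card ≤ OLL.card + OLW.card := by
    have hsub : S2m ⊆ (OLL ∪ OLW).image
        (fun p => Finsupp.single p.1 2 + Finsupp.single p.2 1) := by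
      intro m hm
      rw [hS2def, Finset.mem_filter] at hm
      obtain ⟨hm3, hsc⟩ := hm
      rw [hmemX3] at hm3
      obtain ⟨x, y, hxy, hx2, hy1, hmeq⟩ := deg3_card2_class hm3.2 hsc
      have hxs : x ∈ m.support := Finsupp.mem_support_iff.mpr (by omega)
      have hys : y ∈ m.support := Finsupp.mem_support_iff.mpr (by omega)
      have hxV : x ∈ V := hsuppV _ hm3.1 x hxs
      have hyV : y ∈ V := hsuppV _ hm3.1 y hys
      have hxL : x ∈ L := (hmemL x).mpr
        ⟨hxV, hdown _ hm3.1 _ (single_le_of_apply _ x 2 (by omega))⟩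
      have hple : Finsupp.single x 1 + Finsupp.single y 1 ≤ m :=
        pair_le hxy (by omega) (by omega)
      have hpOP : (x, y) ∈ OP := (hmemOP (x,y)).mpr
        ⟨⟨hxV, hyV⟩, hxy, hdown _ hm3.1 _ hple⟩
      have hmem : (x, y) ∈ OLL ∪ OLW := by
        rcases hLorW y hyV with hyL | hyW
        · exact Finset.mem_union_left _ (Finset.mem_filter.mpr ⟨hpOP, hxL, hyL⟩)
        · exact Finset.mem_union_right _ (Finset.mem_filter.mpr ⟨hpOP, hxL, hyW⟩)
      rw [hmeq]
      exact Finset.mem_image_of_mem _ hmem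
    calc S2m.card ≤ ((OLL ∪ OLW).image _).card := Finset.card_le_card hsub
      _ ≤ (OLL ∪ OLW).card := Finset.card_image_le
      _ ≤ OLL.card + OLW.card := Finset.card_union_le _ _
  -- OLL is small
  have hOLL4 : OLL.card ≤ 4 := by
    rcases Finset.eq_empty_or_nonempty W with hWe | ⟨u, hu⟩
    · have : W.card = 0 := by rw [hWe]; rfl
      have hOLLsub : OLL.card ≤ OP.card := Finset.card_le_card (Finset.filter_subset _ _)
      omega
    · have h6 := hbud2 u hu
      have hc := hcov2 u hu
      omega
  -- no triangles inside L
  have hS30 : ∀ m ∈ S3m, 1 ≤ (m.support ∩ W).card := by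
    intro m hm
    by_contra hc
    have hc0 : (m.support ∩ W).card = 0 := by omega
    rw [Finset.card_eq_zero] at hc0
    rw [hS3def, Finset.mem_filter] at hm
    obtain ⟨hm3, hsc⟩ := hm
    rw [hmemX3] at hm3
    obtain ⟨a, b, c, hab, hac, hbc, hsupp⟩ := Finset.card_eq_three.mp hsc
    have hLmem : ∀ v ∈ m.support, v ∈ L := by
      intro v hv
      rcases hLorW v (hsuppV _ hm3.1 v hv) with h | h
      · exact h
      · exfalso
        have : v ∈ m.support ∩ W := Finset.mem_inter.mpr ⟨hv, h⟩
        rw [hc0] at this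
        exact Finset.notMem_empty v this
    have hmemO : ∀ p q : Fin r, p ≠ q → p ∈ m.support → q ∈ m.support → (p, q) ∈ OLL := by
      intro p q hpq hps hqs
      have h1p : 1 ≤ m p := by have := Finsupp.mem_support_iff.mp hps; omega
      have h1q : 1 ≤ m q := by have := Finsupp.mem_support_iff.mp hqs; omega
      exact Finset.mem_filter.mpr ⟨(hmemOP (p,q)).mpr ⟨⟨hsuppV _ hm3.1 p hps,
        hsuppV _ hm3.1 q hqs⟩, hpq, hdown _ hm3.1 _ (pair_le hpq h1p h1q)⟩,
        hLmem p hps, hLmem q hqs⟩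
    have ha : a ∈ m.support := by rw [hsupp]; simp
    have hb : b ∈ m.support := by rw [hsupp]; simp
    have hcs : c ∈ m.support := by rw [hsupp]; simp
    have hsub : ({(a,b), (a,c), (b,a), (b,c), (c,a), (c,b)} : Finset (Fin r × Fin r)) ⊆ OLL := by
      intro p hp
      simp only [Finset.mem_insert, Finset.mem_singleton] at hp
      rcases hp with rfl | rfl | rfl | rfl | rfl | rfl
      · exact hmemO a b hab ha hb
      · exact hmemO a c hac ha hcs
      · exact hmemO b a (Ne.symm hab) hb ha
      · exact hmemO b c hbc hb hcs
      · exact hmemO c a (Ne.symm hac) hcs ha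
      · exact hmemO c b (Ne.symm hbc) hcs hb
    have h6 : 6 ≤ OLL.card := by
      calc 6 = ({(a,b), (a,c), (b,a), (b,c), (c,a), (c,b)} : Finset (Fin r × Fin r)).card :=
        (card_six_pairs hab hac hbc).symm
      _ ≤ OLL.card := Finset.card_le_card hsub
    omega
  -- Part E : triangle counting
  have hDb_eq : ∀ u, Db u = (L.filter
      (fun x => x ≠ u ∧ (Finsupp.single x 1 + Finsupp.single u 1) ∈ X)).card := fun u => rfl
  have hDc_eq : ∀ u, Dc u = (W.filter
      (fun x => x ≠ u ∧ (Finsupp.single x 1 + Finsupp.single u 1) ∈ X)).card := fun u => rfl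
  set T1s := fun u => (L ×ˢ L).filter (fun p => p.1 ≠ p.2 ∧
    (Finsupp.single p.1 1 + Finsupp.single p.2 1 + Finsupp.single u 1) ∈ X) with hT1def
  set T2s := fun u => (L ×ˢ W).filter (fun p => p.2 ≠ u ∧
    (Finsupp.single p.1 1 + Finsupp.single p.2 1 + Finsupp.single u 1) ∈ X) with hT2def
  set T3s := fun u => (W ×ˢ W).filter (fun p => p.1 ≠ p.2 ∧ p.1 ≠ u ∧ p.2 ≠ u ∧
    (Finsupp.single p.1 1 + Finsupp.single p.2 1 + Finsupp.single u 1) ∈ X) with hT3def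
  have hneWL : ∀ x ∈ L, ∀ u ∈ W, x ≠ u := by
    intro x hx u hu h
    exact hLWdisj x hx (h ▸ hu)
  have hkeyU : ∀ u ∈ W,
      3*(T1s u).card + 3*(T2s u).card + (T3s u).card + 6 ≤ 6*Db u + 6*Dc u := by
    intro u hu
    have b1 : (T1s u).card ≤ OLL.card := by
      apply Finset.card_le_card
      intro p hp
      rw [hT1def, Finset.mem_filter, Finset.mem_product] at hp
      obtain ⟨⟨h1L, h2L⟩, hne, hX'⟩ := hp
      exact Finset.mem_filter.mpr ⟨(hmemOP p).mpr ⟨⟨hLV h1L, hLV h2L⟩, hne,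
        hdown _ hX' _ (pair_le_tri_12 p.1 p.2 u)⟩, h1L, h2L⟩
    have b2 : (T1s u).card ≤ Db u * Db u - Db u := by
      rw [hDb_eq, ← Finset.offDiag_card]
      apply Finset.card_le_card
      intro p hp
      rw [hT1def, Finset.mem_filter, Finset.mem_product] at hp
      obtain ⟨⟨h1L, h2L⟩, hne, hX'⟩ := hp
      rw [Finset.mem_offDiag]
      refine ⟨Finset.mem_filter.mpr ⟨h1L, hneWL _ h1L u hu,
          hdown _ hX' _ (pair_le_tri_1u p.1 p.2 u)⟩,
        Finset.mem_filter.mpr ⟨h2L, hneWL _ h2L u hu,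
          hdown _ hX' _ (pair_le_tri_2u p.1 p.2 u)⟩, hne⟩
    have b3 : (T2s u).card ≤ Db u * Dc u := by
      rw [hDb_eq, hDc_eq, ← Finset.card_product]
      apply Finset.card_le_card
      intro p hp
      rw [hT2def, Finset.mem_filter, Finset.mem_product] at hp
      obtain ⟨⟨h1L, h2W⟩, hne, hX'⟩ := hp
      rw [Finset.mem_product]
      exact ⟨Finset.mem_filter.mpr ⟨h1L, hneWL _ h1L u hu,
          hdown _ hX' _ (pair_le_tri_1u p.1 p.2 u)⟩,
        Finset.mem_filter.mpr ⟨h2W, hne, hdown _ hX' _ (pair_le_tri_2u p.1 p.2 u)⟩⟩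
    have b4 : (T3s u).card ≤ Dc u * Dc u - Dc u := by
      rw [hDc_eq, ← Finset.offDiag_card]
      apply Finset.card_le_card
      intro p hp
      rw [hT3def, Finset.mem_filter, Finset.mem_product] at hp
      obtain ⟨⟨h1W, h2W⟩, hne, hne1, hne2, hX'⟩ := hp
      rw [Finset.mem_offDiag]
      exact ⟨Finset.mem_filter.mpr ⟨h1W, hne1, hdown _ hX' _ (pair_le_tri_1u p.1 p.2 u)⟩,
        Finset.mem_filter.mpr ⟨h2W, hne2, hdown _ hX' _ (pair_le_tri_2u p.1 p.2 u)⟩, hne⟩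
    exact key_arith (Db u) (Dc u) _ _ _ _ b1 b2 b3 b4 (hbud2 u hu) (hcov2 u hu)
  -- the three incidence sets
  set I1 := (W ×ˢ (L ×ˢ L)).filter (fun t => t.2.1 ≠ t.2.2 ∧
    (Finsupp.single t.2.1 1 + Finsupp.single t.2.2 1 + Finsupp.single t.1 1) ∈ X) with hI1def
  set I2 := (W ×ˢ (L ×ˢ W)).filter (fun t => t.2.2 ≠ t.1 ∧
    (Finsupp.single t.2.1 1 + Finsupp.single t.2.2 1 + Finsupp.single t.1 1) ∈ X) with hI2def
  set I3 := (W ×ˢ (W ×ˢ W)).filter (fun t => t.2.1 ≠ t.2.2 ∧ t.2.1 ≠ t.1 ∧ t.2.2 ≠ t.1 ∧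
    (Finsupp.single t.2.1 1 + Finsupp.single t.2.2 1 + Finsupp.single t.1 1) ∈ X) with hI3def
  have hI1sum : I1.card = ∑ u ∈ W, (T1s u).card := by
    rw [Finset.card_eq_sum_card_fiberwise (f := Prod.fst) (t := W)
      (fun t ht => (Finset.mem_product.mp (Finset.mem_filter.mp ht).1).1)]
    refine Finset.sum_congr rfl (fun u hu => ?_)
    apply Finset.card_bij (fun t _ => t.2)
    · intro t ht
      obtain ⟨ht1, ht2⟩ := Finset.mem_filter.mp ht
      obtain ⟨hmemt, hcondt⟩ := Finset.mem_filter.mp ht1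
      obtain ⟨htW, htP⟩ := Finset.mem_product.mp hmemt
      refine Finset.mem_filter.mpr ⟨htP, ?_⟩
      rw [← ht2]
      exact hcondt
    · intro t ht t' ht' htt
      rw [Finset.mem_filter] at ht ht'
      exact Prod.ext (ht.2.trans ht'.2.symm) htt
    · intro p hp
      obtain ⟨hpP, hpc⟩ := Finset.mem_filter.mp hp
      exact ⟨(u, p), Finset.mem_filter.mpr ⟨Finset.mem_filter.mpr
        ⟨Finset.mem_product.mpr ⟨hu, hpP⟩, hpc⟩, rfl⟩, rfl⟩
  have hI2sum : I2.card = ∑ u ∈ W, (T2s u).card := by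
    rw [Finset.card_eq_sum_card_fiberwise (f := Prod.fst) (t := W)
      (fun t ht => (Finset.mem_product.mp (Finset.mem_filter.mp ht).1).1)]
    refine Finset.sum_congr rfl (fun u hu => ?_)
    apply Finset.card_bij (fun t _ => t.2)
    · intro t ht
      obtain ⟨ht1, ht2⟩ := Finset.mem_filter.mp ht
      obtain ⟨hmemt, hcondt⟩ := Finset.mem_filter.mp ht1
      obtain ⟨htW, htP⟩ := Finset.mem_product.mp hmemt
      refine Finset.mem_filter.mpr ⟨htP, ?_⟩
      rw [← ht2]
      exact hcondt
    · intro t ht t' ht' htt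
      rw [Finset.mem_filter] at ht ht'
      exact Prod.ext (ht.2.trans ht'.2.symm) htt
    · intro p hp
      obtain ⟨hpP, hpc⟩ := Finset.mem_filter.mp hp
      exact ⟨(u, p), Finset.mem_filter.mpr ⟨Finset.mem_filter.mpr
        ⟨Finset.mem_product.mpr ⟨hu, hpP⟩, hpc⟩, rfl⟩, rfl⟩
  have hI3sum : I3.card = ∑ u ∈ W, (T3s u).card := by
    rw [Finset.card_eq_sum_card_fiberwise (f := Prod.fst) (t := W)
      (fun t ht => (Finset.mem_product.mp (Finset.mem_filter.mp ht).1).1)]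
    refine Finset.sum_congr rfl (fun u hu => ?_)
    apply Finset.card_bij (fun t _ => t.2)
    · intro t ht
      obtain ⟨ht1, ht2⟩ := Finset.mem_filter.mp ht
      obtain ⟨hmemt, hcondt⟩ := Finset.mem_filter.mp ht1
      obtain ⟨htW, htP⟩ := Finset.mem_product.mp hmemt
      refine Finset.mem_filter.mpr ⟨htP, ?_⟩
      rw [← ht2]
      exact hcondt
    · intro t ht t' ht' htt
      rw [Finset.mem_filter] at ht ht'
      exact Prod.ext (ht.2.trans ht'.2.symm) htt
    · intro p hp
      obtain ⟨hpP, hpc⟩ := Finset.mem_filter.mp hp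
      exact ⟨(u, p), Finset.mem_filter.mpr ⟨Finset.mem_filter.mpr
        ⟨Finset.mem_product.mpr ⟨hu, hpP⟩, hpc⟩, rfl⟩, rfl⟩
  -- Part F : classes of triangles
  set S31 := S3m.filter (fun m => (m.support ∩ W).card = 1) with hS31def
  set S32 := S3m.filter (fun m => (m.support ∩ W).card = 2) with hS32def
  set S33 := S3m.filter (fun m => (m.support ∩ W).card = 3) with hS33def
  have hS3sub : S3m.card ≤ S31.card + S32.card + S33.card := by
    have hsub : S3m ⊆ S31 ∪ S32 ∪ S33 := by
      intro m hm
      have h1 := hS30 m hm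
      have hsc : m.support.card = 3 := (Finset.mem_filter.mp hm).2
      have h3 : (m.support ∩ W).card ≤ 3 := by
        calc (m.support ∩ W).card ≤ m.support.card :=
          Finset.card_le_card Finset.inter_subset_left
        _ = 3 := hsc
      rcases (show (m.support ∩ W).card = 1 ∨ (m.support ∩ W).card = 2 ∨
        (m.support ∩ W).card = 3 by omega) with h | h | h
      · exact Finset.mem_union_left _ (Finset.mem_union_left _ (Finset.mem_filter.mpr ⟨hm, h⟩))
      · exact Finset.mem_union_left _ (Finset.mem_union_right _ (Finset.mem_filter.mpr ⟨hm, h⟩))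
      · exact Finset.mem_union_right _ (Finset.mem_filter.mpr ⟨hm, h⟩)
    calc S3m.card ≤ (S31 ∪ S32 ∪ S33).card := Finset.card_le_card hsub
      _ ≤ (S31 ∪ S32).card + S33.card := Finset.card_union_le _ _
      _ ≤ S31.card + S32.card + S33.card := by
          have := Finset.card_union_le S31 S32
          omega
  -- lower bound for I1
  have hI1ge : 2 * S31.card ≤ I1.card := by
    have hmaps : ∀ t ∈ I1, (Finsupp.single t.2.1 1 + Finsupp.single t.2.2 1
        + Finsupp.single t.1 1) ∈ S31 := by
      intro t ht
      obtain ⟨hmemt, hnet, hXt⟩ := Finset.mem_filter.mp ht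
      obtain ⟨htW, htP⟩ := Finset.mem_product.mp hmemt
      obtain ⟨h1L, h2L⟩ := Finset.mem_product.mp htP
      have h1u : t.2.1 ≠ t.1 := hneWL _ h1L _ htW
      have h2u : t.2.2 ≠ t.1 := hneWL _ h2L _ htW
      have hsupp := supp_triple hnet h1u h2u
      have hsc : (Finsupp.single t.2.1 1 + Finsupp.single t.2.2 1
          + Finsupp.single t.1 1).support.card = 3 := by
        rw [hsupp, Finset.card_insert_of_notMem (by simp [hnet, h1u]),
          Finset.card_insert_of_notMem (by simp [h2u]), Finset.card_singleton]
      have hw1 : ((Finsupp.single t.2.1 1 + Finsupp.single t.2.2 1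
          + Finsupp.single t.1 1).support ∩ W).card = 1 := by
        have : (Finsupp.single t.2.1 1 + Finsupp.single t.2.2 1
            + Finsupp.single t.1 1).support ∩ W = {t.1} := by
          rw [hsupp]
          ext v
          simp only [Finset.mem_inter, Finset.mem_insert, Finset.mem_singleton]
          constructor
          · rintro ⟨rfl | rfl | rfl, hvW⟩
            · exact absurd hvW (fun h => hLWdisj _ h1L h)
            · exact absurd hvW (fun h => hLWdisj _ h2L h)
            · rfl
          · rintro rfl
            exact ⟨Or.inr (Or.inr rfl), htW⟩
        rw [this, Finset.card_singleton]
      exact Finset.mem_filter.mpr ⟨Finset.mem_filter.mpr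
        ⟨(hmemX3 _).mpr ⟨hXt, deg_triple _ _ _⟩, hsc⟩, hw1⟩
    rw [Finset.card_eq_sum_card_fiberwise hmaps]
    have hfib2 : ∀ m ∈ S31, 2 ≤ (I1.filter (fun t => Finsupp.single t.2.1 1
        + Finsupp.single t.2.2 1 + Finsupp.single t.1 1 = m)).card := by
      intro m hm
      obtain ⟨hmS3m, hw1⟩ := Finset.mem_filter.mp hm
      obtain ⟨hmX3', hsc⟩ := Finset.mem_filter.mp hmS3m
      obtain ⟨hmX, hdeg3⟩ := (hmemX3 m).mp hmX3'
      obtain ⟨u, hu⟩ := Finset.card_eq_one.mp hw1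
      have huiw : u ∈ m.support ∩ W := by rw [hu]; exact Finset.mem_singleton_self u
      have huW : u ∈ W := (Finset.mem_inter.mp huiw).2
      have hus : u ∈ m.support := (Finset.mem_inter.mp huiw).1
      have herase : (m.support.erase u).card = 2 := by
        rw [Finset.card_erase_of_mem hus, hsc]
      obtain ⟨x, y, hxy, hxyeq⟩ := Finset.card_eq_two.mp herase
      have hxe : x ∈ m.support.erase u := by rw [hxyeq]; simp
      have hye : y ∈ m.support.erase u := by rw [hxyeq]; simp
      have hxs := Finset.mem_of_mem_erase hxe
      have hys := Finset.mem_of_mem_erase hye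
      have hxu : x ≠ u := Finset.ne_of_mem_erase hxe
      have hyu : y ≠ u := Finset.ne_of_mem_erase hye
      have hnotW : ∀ v ∈ m.support, v ≠ u → v ∉ W := by
        intro v hv hvne hvW
        have : v ∈ m.support ∩ W := Finset.mem_inter.mpr ⟨hv, hvW⟩
        rw [hu] at this
        exact hvne (Finset.mem_singleton.mp this)
      have hxL : x ∈ L := by
        rcases hLorW x (hsuppV _ hmX x hxs) with h | h
        · exact h
        · exact absurd h (hnotW x hxs hxu)
      have hyL : y ∈ L := by
        rcases hLorW y (hsuppV _ hmX y hys) with h | h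
        · exact h
        · exact absurd h (hnotW y hys hyu)
      have hsupp : m.support = {x, y, u} := by
        have h1 : m.support = insert u (m.support.erase u) := (Finset.insert_erase hus).symm
        rw [h1, hxyeq]
        ext v
        simp only [Finset.mem_insert, Finset.mem_singleton]
        tauto
      have hmeq := squarefree_triple hxy hxu hyu hdeg3 hsupp
      have ht1 : (u, (x, y)) ∈ I1.filter (fun t => Finsupp.single t.2.1 1
          + Finsupp.single t.2.2 1 + Finsupp.single t.1 1 = m) := by
        refine Finset.mem_filter.mpr ⟨Finset.mem_filter.mpr
          ⟨Finset.mem_product.mpr ⟨huW, Finset.mem_product.mpr ⟨hxL, hyL⟩⟩, hxy, ?_⟩, hmeq.symm⟩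
        rw [← hmeq]; exact hmX
      have ht2 : (u, (y, x)) ∈ I1.filter (fun t => Finsupp.single t.2.1 1
          + Finsupp.single t.2.2 1 + Finsupp.single t.1 1 = m) := by
        have hmeq2 : m = Finsupp.single y 1 + Finsupp.single x 1 + Finsupp.single u 1 := by
          rw [hmeq, tri_swap12]
        refine Finset.mem_filter.mpr ⟨Finset.mem_filter.mpr
          ⟨Finset.mem_product.mpr ⟨huW, Finset.mem_product.mpr ⟨hyL, hxL⟩⟩,
            Ne.symm hxy, ?_⟩, hmeq2.symm⟩
        rw [← hmeq2]; exact hmX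
      calc 2 = ({(u,(x,y)), (u,(y,x))} : Finset (Fin r × Fin r × Fin r)).card := by
            rw [Finset.card_pair (by simp [Prod.ext_iff, hxy])]
        _ ≤ _ := Finset.card_le_card (by
            intro t ht
            rcases Finset.mem_insert.mp ht with rfl | ht'
            · exact ht1
            · rw [Finset.mem_singleton] at ht'
              subst ht'
              exact ht2)
    calc 2 * S31.card = S31.card • 2 := by rw [smul_eq_mul, mul_comm]
      _ ≤ _ := Finset.card_nsmul_le_sum _ _ _ hfib2
  -- lower bound for I2
  have hI2ge : 2 * S32.card ≤ I2.card := by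
    have hmaps : ∀ t ∈ I2, (Finsupp.single t.2.1 1 + Finsupp.single t.2.2 1
        + Finsupp.single t.1 1) ∈ S32 := by
      intro t ht
      obtain ⟨hmemt, hnet, hXt⟩ := Finset.mem_filter.mp ht
      obtain ⟨htW, htP⟩ := Finset.mem_product.mp hmemt
      obtain ⟨h1L, h2W⟩ := Finset.mem_product.mp htP
      have h1u : t.2.1 ≠ t.1 := hneWL _ h1L _ htW
      have h12 : t.2.1 ≠ t.2.2 := hneWL _ h1L _ h2W
      have hsupp := supp_triple h12 h1u hnet
      have hsc : (Finsupp.single t.2.1 1 + Finsupp.single t.2.2 1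
          + Finsupp.single t.1 1).support.card = 3 := by
        rw [hsupp, Finset.card_insert_of_notMem (by simp [h12, h1u]),
          Finset.card_insert_of_notMem (by simp [hnet]), Finset.card_singleton]
      have hw2 : ((Finsupp.single t.2.1 1 + Finsupp.single t.2.2 1
          + Finsupp.single t.1 1).support ∩ W).card = 2 := by
        have heq : (Finsupp.single t.2.1 1 + Finsupp.single t.2.2 1
            + Finsupp.single t.1 1).support ∩ W = {t.2.2, t.1} := by
          rw [hsupp]
          ext v
          simp only [Finset.mem_inter, Finset.mem_insert, Finset.mem_singleton]
          constructor
          · rintro ⟨rfl | rfl | rfl, hvW⟩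
            · exact absurd hvW (fun h => hLWdisj _ h1L h)
            · exact Or.inl rfl
            · exact Or.inr rfl
          · rintro (rfl | rfl)
            · exact ⟨Or.inr (Or.inl rfl), h2W⟩
            · exact ⟨Or.inr (Or.inr rfl), htW⟩
        rw [heq, Finset.card_pair hnet]
      exact Finset.mem_filter.mpr ⟨Finset.mem_filter.mpr
        ⟨(hmemX3 _).mpr ⟨hXt, deg_triple _ _ _⟩, hsc⟩, hw2⟩
    rw [Finset.card_eq_sum_card_fiberwise hmaps]
    have hfib2 : ∀ m ∈ S32, 2 ≤ (I2.filter (fun t => Finsupp.single t.2.1 1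
        + Finsupp.single t.2.2 1 + Finsupp.single t.1 1 = m)).card := by
      intro m hm
      obtain ⟨hmS3m, hw2⟩ := Finset.mem_filter.mp hm
      obtain ⟨hmX3', hsc⟩ := Finset.mem_filter.mp hmS3m
      obtain ⟨hmX, hdeg3⟩ := (hmemX3 m).mp hmX3'
      obtain ⟨u, w, huw, huweq⟩ := Finset.card_eq_two.mp hw2
      have huiw : u ∈ m.support ∩ W := by rw [huweq]; simp
      have hwiw : w ∈ m.support ∩ W := by rw [huweq]; simp
      have huW : u ∈ W := (Finset.mem_inter.mp huiw).2
      have hwW : w ∈ W := (Finset.mem_inter.mp hwiw).2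
      have hus : u ∈ m.support := (Finset.mem_inter.mp huiw).1
      have hws : w ∈ m.support := (Finset.mem_inter.mp hwiw).1
      have hP : m.support ∩ W ⊆ m.support := Finset.inter_subset_left
      have hsd : (m.support \ (m.support ∩ W)).card = 1 := by
        rw [Finset.card_sdiff_of_subset hP, hsc, hw2]
      obtain ⟨x, hx⟩ := Finset.card_eq_one.mp hsd
      have hxin : x ∈ m.support \ (m.support ∩ W) := by rw [hx]; simp
      have hxs : x ∈ m.support := (Finset.mem_sdiff.mp hxin).1
      have hxni : x ∉ m.support ∩ W := (Finset.mem_sdiff.mp hxin).2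
      have hxW : x ∉ W := fun h => hxni (Finset.mem_inter.mpr ⟨hxs, h⟩)
      have hxL : x ∈ L := by
        rcases hLorW x (hsuppV _ hmX x hxs) with h | h
        · exact h
        · exact absurd h hxW
      have hxu : x ≠ u := fun h => hxni (h ▸ huiw)
      have hxw : x ≠ w := fun h => hxni (h ▸ hwiw)
      have hsupp : m.support = {x, w, u} := by
        have h1 : m.support = (m.support \ (m.support ∩ W)) ∪ (m.support ∩ W) :=
          (Finset.sdiff_union_of_subset hP).symm
        rw [h1, hx, huweq]
        ext v
        simp only [Finset.mem_union, Finset.mem_insert, Finset.mem_singleton]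
        tauto
      have hmeq := squarefree_triple hxw hxu (Ne.symm huw) hdeg3 hsupp
      have ht1 : (u, (x, w)) ∈ I2.filter (fun t => Finsupp.single t.2.1 1
          + Finsupp.single t.2.2 1 + Finsupp.single t.1 1 = m) := by
        refine Finset.mem_filter.mpr ⟨Finset.mem_filter.mpr
          ⟨Finset.mem_product.mpr ⟨huW, Finset.mem_product.mpr ⟨hxL, hwW⟩⟩,
            Ne.symm huw, ?_⟩, hmeq.symm⟩
        rw [← hmeq]; exact hmX
      have ht2 : (w, (x, u)) ∈ I2.filter (fun t => Finsupp.single t.2.1 1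
          + Finsupp.single t.2.2 1 + Finsupp.single t.1 1 = m) := by
        have hmeq2 : m = Finsupp.single x 1 + Finsupp.single u 1 + Finsupp.single w 1 := by
          rw [hmeq, tri_rot]
        refine Finset.mem_filter.mpr ⟨Finset.mem_filter.mpr
          ⟨Finset.mem_product.mpr ⟨hwW, Finset.mem_product.mpr ⟨hxL, huW⟩⟩,
            huw, ?_⟩, hmeq2.symm⟩
        rw [← hmeq2]; exact hmX
      calc 2 = ({(u,(x,w)), (w,(x,u))} : Finset (Fin r × Fin r × Fin r)).card := by
            rw [Finset.card_pair (by simp [Prod.ext_iff, huw])]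
        _ ≤ _ := Finset.card_le_card (by
            intro t ht
            rcases Finset.mem_insert.mp ht with rfl | ht'
            · exact ht1
            · rw [Finset.mem_singleton] at ht'
              subst ht'
              exact ht2)
    calc 2 * S32.card = S32.card • 2 := by rw [smul_eq_mul, mul_comm]
      _ ≤ _ := Finset.card_nsmul_le_sum _ _ _ hfib2
  -- lower bound for I3
  have hI3ge : 6 * S33.card ≤ I3.card := by
    have hmaps : ∀ t ∈ I3, (Finsupp.single t.2.1 1 + Finsupp.single t.2.2 1
        + Finsupp.single t.1 1) ∈ S33 := by
      intro t ht
      obtain ⟨hmemt, hnet, hne1, hne2, hXt⟩ := Finset.mem_filter.mp ht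
      obtain ⟨htW, htP⟩ := Finset.mem_product.mp hmemt
      obtain ⟨h1W, h2W⟩ := Finset.mem_product.mp htP
      have hsupp := supp_triple hnet hne1 hne2
      have hsc : (Finsupp.single t.2.1 1 + Finsupp.single t.2.2 1
          + Finsupp.single t.1 1).support.card = 3 := by
        rw [hsupp, Finset.card_insert_of_notMem (by simp [hnet, hne1]),
          Finset.card_insert_of_notMem (by simp [hne2]), Finset.card_singleton]
      have hw3 : ((Finsupp.single t.2.1 1 + Finsupp.single t.2.2 1
          + Finsupp.single t.1 1).support ∩ W).card = 3 := by
        have heq : (Finsupp.single t.2.1 1 + Finsupp.single t.2.2 1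
            + Finsupp.single t.1 1).support ∩ W
            = (Finsupp.single t.2.1 1 + Finsupp.single t.2.2 1
            + Finsupp.single t.1 1).support := by
          apply Finset.inter_eq_left.mpr
          rw [hsupp]
          intro v hv
          simp only [Finset.mem_insert, Finset.mem_singleton] at hv
          rcases hv with rfl | rfl | rfl
          · exact h1W
          · exact h2W
          · exact htW
        rw [heq, hsc]
      exact Finset.mem_filter.mpr ⟨Finset.mem_filter.mpr
        ⟨(hmemX3 _).mpr ⟨hXt, deg_triple _ _ _⟩, hsc⟩, hw3⟩
    rw [Finset.card_eq_sum_card_fiberwise hmaps]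
    have hfib6 : ∀ m ∈ S33, 6 ≤ (I3.filter (fun t => Finsupp.single t.2.1 1
        + Finsupp.single t.2.2 1 + Finsupp.single t.1 1 = m)).card := by
      intro m hm
      obtain ⟨hmS3m, hw3⟩ := Finset.mem_filter.mp hm
      obtain ⟨hmX3', hsc⟩ := Finset.mem_filter.mp hmS3m
      obtain ⟨hmX, hdeg3⟩ := (hmemX3 m).mp hmX3'
      have hiw : m.support ∩ W = m.support :=
        Finset.eq_of_subset_of_card_le Finset.inter_subset_left (by omega)
      have hsubW : ∀ v ∈ m.support, v ∈ W := by
        intro v hv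
        have : v ∈ m.support ∩ W := by rw [hiw]; exact hv
        exact (Finset.mem_inter.mp this).2
      obtain ⟨a, b, c, hab, hac, hbc, hsupp⟩ := Finset.card_eq_three.mp hsc
      have haW : a ∈ W := hsubW a (by rw [hsupp]; simp)
      have hbW : b ∈ W := hsubW b (by rw [hsupp]; simp)
      have hcW : c ∈ W := hsubW c (by rw [hsupp]; simp)
      have hperm : ∀ p q v : Fin r, ({p, q, v} : Finset (Fin r)) = {a, b, c} →
          m.support = {p, q, v} := by
        intro p q v hpqv
        rw [hsupp, ← hpqv]
      have e1 : m = Finsupp.single b 1 + Finsupp.single c 1 + Finsupp.single a 1 :=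
        squarefree_triple hbc (Ne.symm hab) (Ne.symm hac) hdeg3
          (hperm b c a (by ext v; simp only [Finset.mem_insert, Finset.mem_singleton]; tauto))
      have e2 : m = Finsupp.single c 1 + Finsupp.single b 1 + Finsupp.single a 1 :=
        squarefree_triple (Ne.symm hbc) (Ne.symm hac) (Ne.symm hab) hdeg3
          (hperm c b a (by ext v; simp only [Finset.mem_insert, Finset.mem_singleton]; tauto))
      have e3 : m = Finsupp.single a 1 + Finsupp.single c 1 + Finsupp.single b 1 :=
        squarefree_triple hac hab (Ne.symm hbc) hdeg3
          (hperm a c b (by ext v; simp only [Finset.mem_insert, Finset.mem_singleton]; tauto))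
      have e4 : m = Finsupp.single c 1 + Finsupp.single a 1 + Finsupp.single b 1 :=
        squarefree_triple (Ne.symm hac) (Ne.symm hbc) hab hdeg3
          (hperm c a b (by ext v; simp only [Finset.mem_insert, Finset.mem_singleton]; tauto))
      have e5 : m = Finsupp.single a 1 + Finsupp.single b 1 + Finsupp.single c 1 :=
        squarefree_triple hab hac hbc hdeg3 hsupp
      have e6 : m = Finsupp.single b 1 + Finsupp.single a 1 + Finsupp.single c 1 :=
        squarefree_triple (Ne.symm hab) hbc hac hdeg3
          (hperm b a c (by ext v; simp only [Finset.mem_insert, Finset.mem_singleton]; tauto))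
      have hmemI3 : ∀ p q v : Fin r, p ∈ W → q ∈ W → v ∈ W → p ≠ q → p ≠ v → q ≠ v →
          m = Finsupp.single p 1 + Finsupp.single q 1 + Finsupp.single v 1 →
          (v, (p, q)) ∈ I3.filter (fun t => Finsupp.single t.2.1 1
            + Finsupp.single t.2.2 1 + Finsupp.single t.1 1 = m) := by
        intro p q v hpW hqW hvW hpq hpv hqv he
        refine Finset.mem_filter.mpr ⟨Finset.mem_filter.mpr
          ⟨Finset.mem_product.mpr ⟨hvW, Finset.mem_product.mpr ⟨hpW, hqW⟩⟩,
            hpq, hpv, hqv, ?_⟩, he.symm⟩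
        rw [← he]; exact hmX
      have hsub : ({(a,(b,c)), (a,(c,b)), (b,(a,c)), (b,(c,a)), (c,(a,b)), (c,(b,a))}
          : Finset (Fin r × Fin r × Fin r)) ⊆ I3.filter (fun t => Finsupp.single t.2.1 1
            + Finsupp.single t.2.2 1 + Finsupp.single t.1 1 = m) := by
        intro t ht
        simp only [Finset.mem_insert, Finset.mem_singleton] at ht
        rcases ht with rfl | rfl | rfl | rfl | rfl | rfl
        · exact hmemI3 b c a hbW hcW haW hbc (Ne.symm hab) (Ne.symm hac) e1
        · exact hmemI3 c b a hcW hbW haW (Ne.symm hbc) (Ne.symm hac) (Ne.symm hab) e2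
        · exact hmemI3 a c b haW hcW hbW hac hab (Ne.symm hbc) e3
        · exact hmemI3 c a b hcW haW hbW (Ne.symm hac) (Ne.symm hbc) hab e4
        · exact hmemI3 a b c haW hbW hcW hab hac hbc e5
        · exact hmemI3 b a c hbW haW hcW (Ne.symm hab) hbc hac e6
      calc 6 = ({(a,(b,c)), (a,(c,b)), (b,(a,c)), (b,(c,a)), (c,(a,b)), (c,(b,a))}
            : Finset (Fin r × Fin r × Fin r)).card := (card_six_triples hab hac hbc).symm
        _ ≤ _ := Finset.card_le_card hsub
    calc 6 * S33.card = S33.card • 6 := by rw [smul_eq_mul, mul_comm]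
      _ ≤ _ := Finset.card_nsmul_le_sum _ _ _ hfib6
  -- final assembly
  have hsumle : ∑ u ∈ W, (3*(T1s u).card + 3*(T2s u).card + (T3s u).card + 6)
      ≤ ∑ u ∈ W, (6*Db u + 6*Dc u) := Finset.sum_le_sum hkeyU
  have hLHS : ∑ u ∈ W, (3*(T1s u).card + 3*(T2s u).card + (T3s u).card + 6)
      = 3*(∑ u ∈ W, (T1s u).card) + 3*(∑ u ∈ W, (T2s u).card)
        + (∑ u ∈ W, (T3s u).card) + 6*W.card := by
    rw [Finset.sum_add_distrib, Finset.sum_add_distrib, Finset.sum_add_distrib,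
      Finset.sum_const, ← Finset.mul_sum, ← Finset.mul_sum, smul_eq_mul, mul_comm W.card 6]
  have hRHS : ∑ u ∈ W, (6*Db u + 6*Dc u) = 6*OLW.card + 6*OWW.card := by
    rw [Finset.sum_add_distrib, ← Finset.mul_sum, ← Finset.mul_sum, hDbsum, hDcsum]
  rw [hLHS, hRHS, ← hI1sum, ← hI2sum, ← hI3sum] at hsumle
  omega
/-- `(1,6,6,6)` and `(1,3,6)` are pure O-sequences, but `(1,7,9,12)` is not. -/
theorem pure_O_sequence_examples :
    IsPureOSequence [1, 6, 6, 6] ∧ IsPureOSequence [1, 3, 6] ∧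
      ¬ IsPureOSequence [1, 7, 9, 12] := by
  exact ⟨pureO_1666, pureO_136, not_pure_17912⟩
end

section
/- Let M be a loopless matroid of rank 3 on a finite ground set with n elements such that every circuit of M has at least 3 elements, and let (h_0, h_1, h_2, h_3) be the h-vector of M. Then h_3 = 0 or h_3 ≥ C(n−2, 2) − 1, where C(n,k) denotes the binomial coefficient. -/
/-!
In a loopless matroid of rank 3 without circuits of size 2 every set of at most two elements is
independent, so `h₃ = b - C(n,2) + n - 1`, where `b` is the number of bases. If `M` has a coloop
`v`, the bases are the sets `{v} ∪ p` with `p` a pair avoiding `v`, so `b = C(n-1,2)` and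
`h₃ = 0`. Otherwise every line misses at least two points. If some line `L` has `m ≥ 3` points
and misses `t = n - m ≥ 2`, the bases with two points on `L` and those with one point on `L`
number at least `C(m,2) t + C(t,2) (m-1)`, because the line through two points off `L` meets `L`
at most once. If every line has two points, all `C(n,3)` triples are bases. Both bounds are at
least `(n-1)(n-3)`, which is exactly `h₃ ≥ C(n-2,2) - 1`.
-/

open Finset

lemma indep_pair_of_girth {α : Type*} {M : Matroid α} (hloopless : ∀ v ∈ M.E, M.Indep {v})
    (hgirth : ∀ C, IsCircuitSet M C → 3 ≤ C.ncard) {x y : α} (hx : x ∈ M.E) (hy : y ∈ M.E) :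
    M.Indep {x, y} := by
  obtain rfl | hxy := eq_or_ne x y
  · simpa using hloopless x hx
  by_contra hdep
  have hcircuit : IsCircuitSet M {x, y} := by
    refine ⟨Set.pair_subset hx hy, hdep, fun D hD => ?_⟩
    obtain rfl | rfl | rfl | rfl := Set.subset_pair_iff_eq.1 hD.subset
    · exact M.empty_indep
    · exact hloopless x hx
    · exact hloopless y hy
    · exact absurd rfl hD.ne
  simpa [Set.ncard_pair hxy] using hgirth _ hcircuit

lemma matroidH_three_three {α : Type*} (M : Matroid α) :
    matroidH M 3 3 = (matroidF M 3 : ℤ) - matroidF M 2 + matroidF M 1 - matroidF M 0 := by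
  simp [matroidH, Finset.sum_range_succ]
  ring

namespace Matroid

variable {α : Type*} {M : Matroid α}

lemma Indep.closure_eq_closure_of_subset_closure {I J : Set α} (hI : M.Indep I) (hIfin : I.Finite)
    (hIJ : I ⊆ M.closure J) (hcard : J.encard ≤ I.encard) : M.closure I = M.closure J := by
  have hle : M.eRk (M.closure J) ≤ M.eRk I :=
    calc M.eRk (M.closure J) = M.eRk J := M.eRk_closure_eq J
      _ ≤ J.encard := M.eRk_le_encard J
      _ ≤ I.encard := hcard
      _ = M.eRk I := hI.eRk_eq_encard.symm
  simpa using (hI.isRkFinite_iff_finite.2 hIfin).closure_eq_closure_of_subset_of_eRk_ge_eRk hIJ hle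

lemma card_le_one_of_subset_closure_inter_closure
    (hpair : ∀ x ∈ M.E, ∀ y ∈ M.E, M.Indep {x, y}) {P Q : Set α} (hP : P.encard ≤ 2)
    (hQ : Q.encard ≤ 2) (hPQ : M.closure P ≠ M.closure Q) {S : Finset α}
    (hS : ↑S ⊆ M.closure P ∩ M.closure Q) : #S ≤ 1 := by
  refine Finset.card_le_one.2 fun a ha b hb => by_contra fun hab => hPQ ?_
  have habP : ({a, b} : Set α) ⊆ M.closure P := Set.pair_subset (hS ha).1 (hS hb).1
  have habQ : ({a, b} : Set α) ⊆ M.closure Q := Set.pair_subset (hS ha).2 (hS hb).2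
  have hind := hpair a (M.closure_subset_ground P (habP (by simp)))
    b (M.closure_subset_ground P (habP (by simp)))
  have hcard : ({a, b} : Set α).encard = 2 := Set.encard_pair hab
  rw [← hind.closure_eq_closure_of_subset_closure (Set.toFinite _) habP (hcard ▸ hP),
    hind.closure_eq_closure_of_subset_closure (Set.toFinite _) habQ (hcard ▸ hQ)]

end Matroid

lemma sum_card_le_card_filter_card_inter {α : Type*} [DecidableEq α] {S : Finset α}
    {T : Finset (Finset α)} {X : Finset α → Finset α} {k : ℕ}
    (hX : ∀ p ∈ S.powersetCard k, ∀ x ∈ X p, x ∉ S ∧ insert x p ∈ T) :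
    ∑ p ∈ S.powersetCard k, #(X p) ≤ #{s ∈ T | #(s ∩ S) = k} := by
  have hinter : ∀ p ∈ S.powersetCard k, ∀ x ∈ X p, insert x p ∩ S = p := fun p hp x hx => by
    rw [insert_inter_of_notMem (hX p hp x hx).1, inter_eq_left.2 (mem_powersetCard.1 hp).1]
  rw [← card_sigma]
  refine card_le_card_of_injOn (fun x => insert x.2 x.1) ?_ ?_
  · rintro ⟨p, x⟩ hpx
    obtain ⟨hp, hx⟩ := mem_sigma.1 hpx
    exact mem_filter.2 ⟨(hX p hp x hx).2, by rw [hinter p hp x hx, (mem_powersetCard.1 hp).2]⟩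
  · rintro ⟨p, x⟩ hpx ⟨p', x'⟩ hpx' h
    obtain ⟨hp, hx⟩ := mem_sigma.1 hpx
    obtain ⟨hp', hx'⟩ := mem_sigma.1 hpx'
    have hpp' : p = p' := by
      rw [← hinter p hp x hx, ← hinter p' hp' x' hx']
      exact congrArg (· ∩ S) h
    subst hpp'
    have hx_mem : x ∈ insert x' p := by simp only at h; exact h ▸ mem_insert_self x p
    rcases mem_insert.1 hx_mem with rfl | hxp
    · rfl
    · exact absurd ((mem_powersetCard.1 hp).1 hxp) (hX p hp x hx).1

lemma two_mul_choose_two (n : ℕ) : 2 * n.choose 2 = n * (n - 1) := by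
  have h := Nat.descFactorial_eq_factorial_mul_choose n 2
  simp only [Nat.descFactorial_succ, Nat.descFactorial_zero, Nat.sub_zero, mul_one] at h
  rw [Nat.factorial_two] at h
  rw [← h, mul_comm]

lemma six_mul_choose_three (n : ℕ) : 6 * n.choose 3 = n * (n - 1) * (n - 2) := by
  have h := Nat.descFactorial_eq_factorial_mul_choose n 3
  simp only [Nat.descFactorial_succ, Nat.descFactorial_zero, Nat.sub_zero, mul_one] at h
  rw [show (6 : ℕ) = Nat.factorial 3 from rfl, ← h]
  ring

lemma sub_one_mul_sub_three_le_choose_three (n : ℕ) : (n - 1) * (n - 3) ≤ n.choose 3 := by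
  rcases lt_or_ge n 3 with hn | hn
  · simp [Nat.sub_eq_zero_of_le (by omega : n ≤ 3)]
  obtain ⟨k, rfl⟩ : ∃ k, n = k + 3 := ⟨n - 3, by omega⟩
  have h := six_mul_choose_three (k + 3)
  simp only [show k + 3 - 1 = k + 2 by omega, show k + 3 - 2 = k + 1 by omega,
    show k + 3 - 3 = k by omega] at h ⊢
  nlinarith [sq_nonneg ((k : ℤ) - 1)]

lemma sub_one_mul_sub_three_le_choose_two_mul_add {m t : ℕ} (hm : 3 ≤ m) (ht : 2 ≤ t) :
    (m + t - 1) * (m + t - 3) ≤ m.choose 2 * t + t.choose 2 * (m - 1) := by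
  obtain ⟨a, rfl⟩ : ∃ a, m = a + 3 := ⟨m - 3, by omega⟩
  obtain ⟨b, rfl⟩ : ∃ b, t = b + 2 := ⟨t - 2, by omega⟩
  have hm2 := two_mul_choose_two (a + 3)
  have ht2 := two_mul_choose_two (b + 2)
  simp only [show a + 3 + (b + 2) - 1 = a + b + 4 by omega,
    show a + 3 + (b + 2) - 3 = a + b + 2 by omega, show a + 3 - 1 = a + 2 by omega,
    show b + 2 - 1 = b + 1 by omega] at hm2 ht2 ⊢
  nlinarith [Nat.zero_le (a * b * (a + b + 4))]

lemma choose_two_pred_sub_choose_two_add_sub_one {n : ℕ} (hn : 1 ≤ n) :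
    ((n - 1).choose 2 : ℤ) - n.choose 2 + n - 1 = 0 := by
  obtain ⟨k, rfl⟩ : ∃ k, n = k + 1 := ⟨n - 1, by omega⟩
  rw [Nat.add_sub_cancel, Nat.choose_succ_succ', Nat.choose_one_right]
  push_cast
  ring

lemma choose_two_sub_two_sub_one_le {n F : ℕ} (hn : 3 ≤ n) (hF : (n - 1) * (n - 3) ≤ F) :
    ((n - 2).choose 2 : ℤ) - 1 ≤ F - n.choose 2 + n - 1 := by
  obtain ⟨k, rfl⟩ : ∃ k, n = k + 3 := ⟨n - 3, by omega⟩
  have h₁ := two_mul_choose_two (k + 1)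
  have h₃ := two_mul_choose_two (k + 3)
  simp only [show k + 3 - 2 = k + 1 by omega, show k + 3 - 1 = k + 2 by omega,
    show k + 3 - 3 = k by omega, Nat.add_sub_cancel] at hF h₁ h₃ ⊢
  zify at hF h₁ h₃
  push_cast
  linarith

section Counting

open scoped Classical

variable {α : Type*} {M : Matroid α} {V : Finset α}

noncomputable def indepFinsets (M : Matroid α) (V : Finset α) (k : ℕ) : Finset (Finset α) :=
  {s ∈ V.powersetCard k | M.Indep ↑s}

lemma mem_indepFinsets {k : ℕ} {s : Finset α} :
    s ∈ indepFinsets M V k ↔ (s ⊆ V ∧ #s = k) ∧ M.Indep ↑s := by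
  rw [indepFinsets, mem_filter, mem_powersetCard]

lemma matroidF_eq_card_indepFinsets (hV : (V : Set α) = M.E) (k : ℕ) :
    matroidF M k = #(indepFinsets M V k) := by
  have himage : {I : Set α | M.Indep I ∧ I.ncard = k}
      = ↑((indepFinsets M V k).image ((↑) : Finset α → Set α)) := by
    ext I
    simp only [Set.mem_ofPred_eq, coe_image, Set.mem_image, mem_coe, mem_indepFinsets]
    constructor
    · rintro ⟨hI, rfl⟩
      obtain ⟨s, rfl⟩ :=
        Set.Finite.exists_finset_coe (V.finite_toSet.subset (hV ▸ hI.subset_ground))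
      exact ⟨s, ⟨⟨by simpa [← hV] using hI.subset_ground, by simp⟩, hI⟩, rfl⟩
    · rintro ⟨s, ⟨⟨-, rfl⟩, hs⟩, rfl⟩
      exact ⟨hs, by simp⟩
  rw [matroidF, himage, Set.ncard_coe_finset, card_image_of_injective _ coe_injective]

lemma card_indepFinsets_of_forall_indep {k : ℕ} (h : ∀ s ⊆ V, #s = k → M.Indep ↑s) :
    #(indepFinsets M V k) = (#V).choose k := by
  rw [indepFinsets, filter_true_of_mem fun s hs => h s (mem_powersetCard.1 hs).1
    (mem_powersetCard.1 hs).2, card_powersetCard]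

lemma insert_mem_indepFinsets (hV : (V : Set α) = M.E) {k : ℕ} {s : Finset α} {x : α}
    (hs : s ∈ indepFinsets M V k) (hx : x ∈ V) (hxs : x ∉ M.closure ↑s) :
    insert x s ∈ indepFinsets M V (k + 1) := by
  obtain ⟨⟨hsV, rfl⟩, hind⟩ := mem_indepFinsets.1 hs
  have hxs' : x ∉ s := fun h => hxs (M.subset_closure _ hind.subset_ground h)
  refine mem_indepFinsets.2 ⟨⟨insert_subset hx hsV, card_insert_of_notMem hxs'⟩, ?_⟩
  rw [coe_insert, hind.insert_indep_iff_of_notMem (by simpa using hxs')]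
  exact ⟨hV ▸ hx, hxs⟩

lemma indep_of_card_eq_two (hV : (V : Set α) = M.E)
    (hpair : ∀ x ∈ M.E, ∀ y ∈ M.E, M.Indep {x, y}) {p : Finset α} (hpV : p ⊆ V) (hp : #p = 2) :
    M.Indep ↑p := by
  obtain ⟨x, y, -, rfl⟩ := card_eq_two.1 hp
  have hxy : ({x, y} : Set α) ⊆ M.E := by rw [← hV, ← coe_pair]; exact coe_subset.2 hpV
  simpa using hpair x (hxy (by simp)) y (hxy (by simp))

lemma card_indepFinsets_of_isColoop (hV : (V : Set α) = M.E) {k : ℕ} {v : α}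
    (hv : M.IsColoop v) (hrank : M.eRank = k + 1) (hk : ∀ s ⊆ V, #s = k → M.Indep ↑s) :
    #(indepFinsets M V (k + 1)) = (#V - 1).choose k := by
  have hvV : v ∈ V := by rw [← mem_coe, hV]; exact hv.mem_ground
  have himage : indepFinsets M V (k + 1) = ((V.erase v).powersetCard k).image (insert v) := by
    ext s
    simp only [mem_indepFinsets, mem_image, mem_powersetCard]
    constructor
    · rintro ⟨⟨hsV, hs⟩, hind⟩
      have hB : M.IsBase ↑s := hind.isBase_of_eRk_ge s.finite_toSet <| by
        rw [hind.eRk_eq_encard, Set.encard_coe_eq_coe_finsetCard, hs, hrank]; rfl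
      have hvs : v ∈ s := hv.mem_of_isBase hB
      exact ⟨s.erase v, ⟨erase_subset_erase v hsV, by rw [card_erase_of_mem hvs, hs]; rfl⟩,
        insert_erase hvs⟩
    · rintro ⟨q, ⟨hqV, rfl⟩, rfl⟩
      have hvq : v ∉ q := fun h => by simpa using hqV h
      have hqV' : q ⊆ V := hqV.trans (erase_subset v V)
      refine ⟨⟨insert_subset hvV hqV', card_insert_of_notMem hvq⟩, ?_⟩
      rw [coe_insert]
      exact hv.insert_indep_of_indep (hk q hqV' rfl)
  rw [himage, card_image_of_injOn, card_powersetCard, card_erase_of_mem hvV]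
  intro q hq q' hq' h
  have hvq : v ∉ q := fun h' => by simpa using (mem_powersetCard.1 hq).1 h'
  have hvq' : v ∉ q' := fun h' => by simpa using (mem_powersetCard.1 hq').1 h'
  rw [← erase_insert hvq, ← erase_insert hvq']
  exact congrArg (·.erase v) h

noncomputable def closureFinset (M : Matroid α) (V : Finset α) (X : Set α) : Finset α :=
  {x ∈ V | x ∈ M.closure X}

lemma mem_closureFinset {X : Set α} {x : α} :
    x ∈ closureFinset M V X ↔ x ∈ V ∧ x ∈ M.closure X := by
  rw [closureFinset, mem_filter]

lemma subset_closureFinset (hV : (V : Set α) = M.E) {p : Finset α} (hpV : p ⊆ V) :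
    p ⊆ closureFinset M V ↑p := fun _ hx =>
  mem_closureFinset.2 ⟨hpV hx, M.subset_closure _ (hV ▸ coe_subset.2 hpV) (mem_coe.2 hx)⟩

lemma two_le_card_sdiff_closureFinset (hV : (V : Set α) = M.E)
    (hcoloop : ∀ x, ¬ M.IsColoop x) (hrank : M.eRank = 3) {p : Finset α} (hp : M.Indep ↑p)
    (hpc : #p = 2) : 2 ≤ #(V \ closureFinset M V ↑p) := by
  by_contra! hlt
  obtain ⟨a, -⟩ := card_pos.1 (by omega : 0 < #p)
  have : Nonempty α := ⟨a⟩
  obtain ⟨x, hx⟩ := card_le_one_iff_subset_singleton.1 (Nat.le_of_lt_succ hlt)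
  have hsub : M.E \ {x} ⊆ M.closure ↑p := fun y ⟨hyE, hyx⟩ => by_contra fun hy =>
    hyx (mem_singleton.1 (hx (mem_sdiff.2 ⟨by rw [← mem_coe, hV]; exact hyE,
      fun hyL => hy (mem_closureFinset.1 hyL).2⟩)))
  have hspan : M.Spanning ↑p := by
    rw [← Matroid.closure_spanning_iff hp.subset_ground]
    exact (not_not.1 (mt Matroid.isColoop_iff_sdiff_not_spanning.2 (hcoloop x))).superset hsub
  have := (hp.isBase_of_spanning hspan).encard_eq_eRank
  rw [hrank, Set.encard_coe_eq_coe_finsetCard, hpc] at this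
  norm_num at this

lemma choose_two_mul_card_sdiff_le_card_filter (hV : (V : Set α) = M.E)
    (hpair : ∀ x ∈ M.E, ∀ y ∈ M.E, M.Indep {x, y}) {p₀ : Finset α} (hp₀ : #p₀ = 2) :
    (#(closureFinset M V ↑p₀)).choose 2 * #(V \ closureFinset M V ↑p₀)
      ≤ #{s ∈ indepFinsets M V 3 | #(s ∩ closureFinset M V ↑p₀) = 2} := by
  set L := closureFinset M V ↑p₀
  rw [← card_powersetCard, ← smul_eq_mul, ← sum_const]
  refine sum_card_le_card_filter_card_inter fun p hp x hx => ?_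
  obtain ⟨hpL, hpc⟩ := mem_powersetCard.1 hp
  have hpV : p ⊆ V := fun y hy => (mem_closureFinset.1 (hpL hy)).1
  have hind := indep_of_card_eq_two hV hpair hpV hpc
  have hline : M.closure ↑p = M.closure ↑p₀ :=
    hind.closure_eq_closure_of_subset_closure p.finite_toSet
      (fun y hy => (mem_closureFinset.1 (hpL hy)).2)
      (by rw [Set.encard_coe_eq_coe_finsetCard, Set.encard_coe_eq_coe_finsetCard, hp₀, hpc])
  obtain ⟨hxV, hxL⟩ := mem_sdiff.1 hx
  refine ⟨hxL, insert_mem_indepFinsets hV (mem_indepFinsets.2 ⟨⟨hpV, hpc⟩, hind⟩) hxV ?_⟩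
  exact hline ▸ fun h => hxL (mem_closureFinset.2 ⟨hxV, h⟩)

lemma choose_two_mul_pred_le_card_filter (hV : (V : Set α) = M.E)
    (hpair : ∀ x ∈ M.E, ∀ y ∈ M.E, M.Indep {x, y}) {p₀ : Finset α} (hp₀ : #p₀ = 2) :
    (#(V \ closureFinset M V ↑p₀)).choose 2 * (#(closureFinset M V ↑p₀) - 1)
      ≤ #{s ∈ indepFinsets M V 3 | #(s ∩ (V \ closureFinset M V ↑p₀)) = 2} := by
  set L := closureFinset M V ↑p₀
  calc (#(V \ L)).choose 2 * (#L - 1) = ∑ q ∈ (V \ L).powersetCard 2, (#L - 1) := by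
        rw [sum_const, card_powersetCard, smul_eq_mul]
    _ ≤ ∑ q ∈ (V \ L).powersetCard 2, #{a ∈ L | a ∉ M.closure ↑q} := sum_le_sum fun q hq => ?_
    _ ≤ _ := sum_card_le_card_filter_card_inter fun q hq a ha => by
        obtain ⟨haL, haq⟩ := mem_filter.1 ha
        obtain ⟨hqO, hqc⟩ := mem_powersetCard.1 hq
        have hqV : q ⊆ V := hqO.trans sdiff_subset
        exact ⟨fun h => (mem_sdiff.1 h).2 haL, insert_mem_indepFinsets hV
          (mem_indepFinsets.2 ⟨⟨hqV, hqc⟩, indep_of_card_eq_two hV hpair hqV hqc⟩)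
          (mem_closureFinset.1 haL).1 haq⟩
  obtain ⟨hqO, hqc⟩ := mem_powersetCard.1 hq
  obtain ⟨y, hy⟩ := card_pos.1 (by omega : 0 < #q)
  have hqV : q ⊆ V := hqO.trans sdiff_subset
  have hdistinct : M.closure ↑p₀ ≠ M.closure ↑q := fun h => (mem_sdiff.1 (hqO hy)).2
    (mem_closureFinset.2 ⟨hqV hy, h ▸ (mem_closureFinset.1 (subset_closureFinset hV hqV hy)).2⟩)
  have hmeet : #{a ∈ L | a ∈ M.closure ↑q} ≤ 1 :=
    Matroid.card_le_one_of_subset_closure_inter_closure hpair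
      (by rw [Set.encard_coe_eq_coe_finsetCard, hp₀]; rfl)
      (by rw [Set.encard_coe_eq_coe_finsetCard, hqc]; rfl) hdistinct
      fun a ha => ⟨(mem_closureFinset.1 (mem_filter.1 ha).1).2, (mem_filter.1 ha).2⟩
  have := card_filter_add_card_filter_not (s := L) (fun a => a ∈ M.closure ↑q)
  omega

lemma card_choose_two_mul_add_le_card_indepFinsets (hV : (V : Set α) = M.E)
    (hpair : ∀ x ∈ M.E, ∀ y ∈ M.E, M.Indep {x, y}) {p₀ : Finset α} (hp₀ : #p₀ = 2) :
    (#(closureFinset M V ↑p₀)).choose 2 * #(V \ closureFinset M V ↑p₀)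
      + (#(V \ closureFinset M V ↑p₀)).choose 2 * (#(closureFinset M V ↑p₀) - 1)
      ≤ #(indepFinsets M V 3) := by
  set L := closureFinset M V ↑p₀
  have hdisj : Disjoint {s ∈ indepFinsets M V 3 | #(s ∩ L) = 2}
      {s ∈ indepFinsets M V 3 | #(s ∩ (V \ L)) = 2} := by
    refine disjoint_filter.2 fun s hs hsL hsO => ?_
    have hLO : Disjoint (s ∩ L) (s ∩ (V \ L)) :=
      disjoint_sdiff.mono inter_subset_right inter_subset_right
    have : #(s ∩ L ∪ s ∩ (V \ L)) ≤ #s :=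
      card_le_card (union_subset inter_subset_left inter_subset_left)
    rw [card_union_of_disjoint hLO, hsL, hsO, (mem_indepFinsets.1 hs).1.2] at this
    omega
  calc _ ≤ #{s ∈ indepFinsets M V 3 | #(s ∩ L) = 2}
        + #{s ∈ indepFinsets M V 3 | #(s ∩ (V \ L)) = 2} :=
        add_le_add (choose_two_mul_card_sdiff_le_card_filter hV hpair hp₀)
          (choose_two_mul_pred_le_card_filter hV hpair hp₀)
    _ = #({s ∈ indepFinsets M V 3 | #(s ∩ L) = 2}
        ∪ {s ∈ indepFinsets M V 3 | #(s ∩ (V \ L)) = 2}) := (card_union_of_disjoint hdisj).symm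
    _ ≤ #(indepFinsets M V 3) := card_le_card (union_subset (filter_subset _ _) (filter_subset _ _))

lemma indep_of_card_eq_three (hV : (V : Set α) = M.E)
    (hpair : ∀ x ∈ M.E, ∀ y ∈ M.E, M.Indep {x, y})
    (hline : ∀ p ⊆ V, #p = 2 → #(closureFinset M V ↑p) < 3) {s : Finset α} (hsV : s ⊆ V)
    (hs : #s = 3) : M.Indep ↑s := by
  obtain ⟨x, y, z, hxy, hxz, hyz, rfl⟩ := card_eq_three.1 hs
  have hyzV : {y, z} ⊆ V := (subset_insert x _).trans hsV
  have hx : x ∉ M.closure ↑({y, z} : Finset α) := fun hx => by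
    have hsub : {x, y, z} ⊆ closureFinset M V ↑({y, z} : Finset α) := insert_subset
      (mem_closureFinset.2 ⟨hsV (mem_insert_self _ _), hx⟩) (subset_closureFinset hV hyzV)
    have := card_le_card hsub
    have := hline {y, z} hyzV (card_pair hyz)
    omega
  exact (mem_indepFinsets.1 (insert_mem_indepFinsets hV (mem_indepFinsets.2
    ⟨⟨hyzV, card_pair hyz⟩, indep_of_card_eq_two hV hpair hyzV (card_pair hyz)⟩)
    (hsV (mem_insert_self _ _)) hx)).2

lemma sub_one_mul_sub_three_le_card_indepFinsets (hV : (V : Set α) = M.E)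
    (hpair : ∀ x ∈ M.E, ∀ y ∈ M.E, M.Indep {x, y}) (hcoloop : ∀ x, ¬ M.IsColoop x)
    (hrank : M.eRank = 3) : (#V - 1) * (#V - 3) ≤ #(indepFinsets M V 3) := by
  by_cases hline : ∃ p ⊆ V, #p = 2 ∧ 3 ≤ #(closureFinset M V ↑p)
  · obtain ⟨p, hpV, hp, hm⟩ := hline
    have ht := two_le_card_sdiff_closureFinset hV hcoloop hrank
      (indep_of_card_eq_two hV hpair hpV hp) hp
    rw [← card_sdiff_add_card_eq_card (filter_subset _ V : closureFinset M V ↑p ⊆ V), add_comm]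
    exact (sub_one_mul_sub_three_le_choose_two_mul_add hm ht).trans
      (card_choose_two_mul_add_le_card_indepFinsets hV hpair hp)
  · push Not at hline
    rw [card_indepFinsets_of_forall_indep fun s => indep_of_card_eq_three hV hpair hline]
    exact sub_one_mul_sub_three_le_choose_three _

lemma matroidH_three_three_eq (hV : (V : Set α) = M.E) (hloopless : ∀ v ∈ M.E, M.Indep {v})
    (hpair : ∀ x ∈ M.E, ∀ y ∈ M.E, M.Indep {x, y}) :
    matroidH M 3 3 = (#(indepFinsets M V 3) : ℤ) - (#V).choose 2 + #V - 1 := by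
  have hsingle : ∀ s ⊆ V, #s = 1 → M.Indep ↑s := fun s hsV hs => by
    obtain ⟨x, rfl⟩ := card_eq_one.1 hs
    simpa using hloopless x (hV ▸ coe_subset.2 hsV (by simp))
  rw [matroidH_three_three, matroidF_eq_card_indepFinsets hV, matroidF_eq_card_indepFinsets hV,
    matroidF_eq_card_indepFinsets hV, matroidF_eq_card_indepFinsets hV,
    card_indepFinsets_of_forall_indep (k := 0) fun s _ hs => by simp [card_eq_zero.1 hs],
    card_indepFinsets_of_forall_indep (k := 1) hsingle,
    card_indepFinsets_of_forall_indep (k := 2) fun s hsV hs => indep_of_card_eq_two hV hpair hsV hs]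
  simp

end Counting

/-- Let `M` be a loopless matroid of rank 3 on a finite ground set with `n` elements
all of whose circuits have at least 3 elements, and let `(h₀,h₁,h₂,h₃)` be the
h-vector of `M`. Then `h₃ = 0` or `h₃ ≥ C(n-2,2) - 1`. -/
theorem h3_zero_or_large {α : Type*} (M : Matroid α) (hfin : M.E.Finite)
    (hloopless : ∀ v ∈ M.E, M.Indep {v})
    (hrank : ∃ B, M.IsBase B ∧ B.ncard = 3)
    (hgirth : ∀ C, IsCircuitSet M C → 3 ≤ C.ncard) :
    matroidH M 3 3 = 0 ∨
      ((M.E.ncard - 2).choose 2 : ℤ) - 1 ≤ matroidH M 3 3 := by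
  set V := hfin.toFinset
  have hV : (V : Set α) = M.E := hfin.coe_toFinset
  have hpair : ∀ x ∈ M.E, ∀ y ∈ M.E, M.Indep {x, y} := fun x hx y hy =>
    indep_pair_of_girth hloopless hgirth hx hy
  obtain ⟨B, hB, hB3⟩ := hrank
  have heRank : M.eRank = 3 := by
    rw [← hB.encard_eq_eRank, ← (hfin.subset hB.subset_ground).cast_ncard_eq, hB3]; rfl
  have hn : 3 ≤ #V := by
    rw [← hB3, ← Set.ncard_coe_finset, hV]; exact Set.ncard_le_ncard hB.subset_ground hfin
  rw [show M.E.ncard = #V by rw [← hV, Set.ncard_coe_finset],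
    matroidH_three_three_eq hV hloopless hpair]
  by_cases hcoloop : ∃ v, M.IsColoop v
  · obtain ⟨v, hv⟩ := hcoloop
    left
    rw [card_indepFinsets_of_isColoop hV hv heRank fun s hsV hs =>
      indep_of_card_eq_two hV hpair hsV hs]
    exact choose_two_pred_sub_choose_two_add_sub_one (by omega)
  · push Not at hcoloop
    exact Or.inr (choose_two_sub_two_sub_one_le hn
      (sub_one_mul_sub_three_le_card_indepFinsets hV hpair hcoloop heRank))
end
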